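/- arXiv:1910.00708 — 3 statements merged into one kernel-verified Lean document; each statement's English description precedes it below -/
import Mathlib

section
/- Let m ≥ 2 be a natural number, A0, A1 nonempty finite index types, and N a quantum channel from Matrix A0 A0 ℂ to Matrix A1 A1 ℂ such that ((m : ℝ) • 𝒟_{full}(J(N)) − J(N)).PosSemidef. Then there exists a state-to-channel supermap Θ : Matrix (Fin m) (Fin m) ℂ →ₗ (Matrix A0 A0 ℂ →ₗ Matrix A1 A1 ℂ) such that: (i) the linear map ρ ↦ J(Θ[ρ]) is completely positive; (ii) Θ[ρ] is trace-preserving for every density matrix ρ; (iii) the DISC covariance condition 𝒟 ∘ Θ[ρ] ∘ 𝒟 = Θ[𝒟(ρ)] holds for all ρ; and (iv) Θ[φ⁺_m] = N, where φ⁺_m i j = 1/m. (Hence the exact single-shot coherence cost under DISC satisfies C⁰_DISC(N) ≤ LR_Δ(N) + 1.) -/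
open Matrix Kronecker ComplexOrder

noncomputable section

/-- Choi matrix of a linear map between matrix algebras. -/
def choi {ι κ : Type*} [Fintype ι] [DecidableEq ι]
    (Φ : Matrix ι ι ℂ →ₗ[ℂ] Matrix κ κ ℂ) : Matrix (ι × κ) (ι × κ) ℂ :=
  Matrix.of fun p q => Φ (Matrix.single p.1 q.1 1) p.2 q.2

/-- Completely positive: the Choi matrix is positive semidefinite. -/
def IsCP {ι κ : Type*} [Fintype ι] [DecidableEq ι] [Fintype κ]
    (Φ : Matrix ι ι ℂ →ₗ[ℂ] Matrix κ κ ℂ) : Prop := (choi Φ).PosSemidef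

/-- Trace preserving. -/
def IsTP {ι κ : Type*} [Fintype ι] [Fintype κ]
    (Φ : Matrix ι ι ℂ →ₗ[ℂ] Matrix κ κ ℂ) : Prop := ∀ X, (Φ X).trace = X.trace

/-- Quantum channel: CP and TP. -/
def IsChannel {ι κ : Type*} [Fintype ι] [DecidableEq ι] [Fintype κ]
    (Φ : Matrix ι ι ℂ →ₗ[ℂ] Matrix κ κ ℂ) : Prop := IsCP Φ ∧ IsTP Φ

/-- Max-relative robustness `r(X‖Y)` between two maps. -/
def maxRelRobust {ι κ : Type*} [Fintype ι] [DecidableEq ι] [Fintype κ]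
    (X Y : Matrix ι ι ℂ →ₗ[ℂ] Matrix κ κ ℂ) : ℝ :=
  sInf {t : ℝ | 0 ≤ t ∧ (t • choi Y - choi X).PosSemidef}

/-- Dephasing (decoherence) map as a linear map. -/
def deph {ι : Type*} [DecidableEq ι] : Matrix ι ι ℂ →ₗ[ℂ] Matrix ι ι ℂ where
  toFun M := Matrix.of fun i j => if i = j then M i j else 0
  map_add' X Y := by
    ext i j
    by_cases h : i = j <;> simp [h]
  map_smul' c X := by
    ext i j
    by_cases h : i = j <;> simp [h]

/-- Classical map: invariant under dephasing of input and output. -/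
def IsClassical {ι κ : Type*} [DecidableEq ι] [DecidableEq κ]
    (Φ : Matrix ι ι ℂ →ₗ[ℂ] Matrix κ κ ℂ) : Prop := deph ∘ₗ Φ ∘ₗ deph = Φ

/-- Coherence robustness `r_C(N)`: robustness relative to classical channels. -/
def coherenceRobust {ι κ : Type*} [Fintype ι] [DecidableEq ι] [Fintype κ] [DecidableEq κ]
    (N : Matrix ι ι ℂ →ₗ[ℂ] Matrix κ κ ℂ) : ℝ :=
  sInf {t : ℝ | 0 ≤ t ∧ ∃ E₀ : Matrix ι ι ℂ →ₗ[ℂ] Matrix κ κ ℂ,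
    IsChannel E₀ ∧ IsClassical E₀ ∧ (t • choi E₀ - choi N).PosSemidef}

/-- The linear map `ρ ↦ J(Θ[ρ])` associated with a state-to-channel supermap. -/
def choiMapOf {ι A0 A1 : Type*} [Fintype ι] [DecidableEq ι] [Fintype A0] [DecidableEq A0]
    (Θ : Matrix ι ι ℂ →ₗ[ℂ] (Matrix A0 A0 ℂ →ₗ[ℂ] Matrix A1 A1 ℂ)) :
    Matrix ι ι ℂ →ₗ[ℂ] Matrix (A0 × A1) (A0 × A1) ℂ where
  toFun ρ := choi (Θ ρ)
  map_add' X Y := by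
    ext p q
    simp [choi, map_add]
  map_smul' c X := by
    ext p q
    simp [choi, _root_.map_smul]

/-- The maximally coherent state `φ⁺_m i j = 1/m`. -/
def maxCoh (m : ℕ) : Matrix (Fin m) (Fin m) ℂ :=
  Matrix.of fun _ _ => (1 : ℂ) / (m : ℂ)


-- ### Helpers

lemma deph_apply {ι : Type*} [DecidableEq ι] (M : Matrix ι ι ℂ) (i j : ι) :
    deph M i j = if i = j then M i j else 0 := rfl

lemma deph_deph {ι : Type*} [DecidableEq ι] (M : Matrix ι ι ℂ) :
    deph (deph M) = deph M := by
  ext i j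
  by_cases h : i = j <;> simp [deph_apply, h]

lemma trace_deph {ι : Type*} [Fintype ι] [DecidableEq ι] (M : Matrix ι ι ℂ) :
    (deph M).trace = M.trace := by
  simp [Matrix.trace, Matrix.diag, deph_apply]

def trMul {n : Type*} [Fintype n] (A : Matrix n n ℂ) : Matrix n n ℂ →ₗ[ℂ] ℂ where
  toFun ρ := (A * ρ).trace
  map_add' X Y := by simp [Matrix.mul_add]
  map_smul' c X := by simp [Matrix.mul_smul]

def Theta {A0 A1 : Type*} [Fintype A0] [DecidableEq A0] [Fintype A1] [DecidableEq A1]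
    (m : ℕ) (N : Matrix A0 A0 ℂ →ₗ[ℂ] Matrix A1 A1 ℂ) :
    Matrix (Fin m) (Fin m) ℂ →ₗ[ℂ] (Matrix A0 A0 ℂ →ₗ[ℂ] Matrix A1 A1 ℂ) :=
  (trMul (maxCoh m)).smulRight N +
    ((((m : ℂ) - 1)⁻¹) • (Matrix.traceLinearMap (Fin m) ℂ ℂ - trMul (maxCoh m))).smulRight
      ((m : ℂ) • (deph ∘ₗ N ∘ₗ deph) - N)

lemma Theta_apply {A0 A1 : Type*} [Fintype A0] [DecidableEq A0] [Fintype A1] [DecidableEq A1]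
    (m : ℕ) (N : Matrix A0 A0 ℂ →ₗ[ℂ] Matrix A1 A1 ℂ)
    (ρ : Matrix (Fin m) (Fin m) ℂ) (X : Matrix A0 A0 ℂ) :
    Theta m N ρ X = ((maxCoh m * ρ).trace) • N X
      + (((m : ℂ) - 1)⁻¹ * (ρ.trace - (maxCoh m * ρ).trace)) •
          ((m : ℂ) • deph (N (deph X)) - N X) := by
  simp [Theta, trMul, LinearMap.smulRight_apply, smul_smul, Matrix.traceLinearMap]

lemma trace_maxCoh_mul {m : ℕ} (ρ : Matrix (Fin m) (Fin m) ℂ) :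
    (maxCoh m * ρ).trace = (m : ℂ)⁻¹ * ∑ t, ∑ k, ρ t k := by
  simp only [Matrix.trace, Matrix.diag, Matrix.mul_apply, maxCoh, Matrix.of_apply, one_div]
  rw [Finset.sum_comm]
  simp [Finset.mul_sum]

lemma trace_maxCoh_sq {m : ℕ} (hm : m ≠ 0) : (maxCoh m * maxCoh m).trace = 1 := by
  rw [trace_maxCoh_mul]
  have : (m : ℂ) ≠ 0 := Nat.cast_ne_zero.mpr hm
  simp [maxCoh, Finset.sum_const, Finset.card_univ]
  field_simp

lemma trace_maxCoh {m : ℕ} (hm : m ≠ 0) : (maxCoh m).trace = 1 := by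
  have : (m : ℂ) ≠ 0 := Nat.cast_ne_zero.mpr hm
  simp [Matrix.trace, Matrix.diag, maxCoh, Finset.sum_const, Finset.card_univ]
  field_simp

lemma trace_maxCoh_deph {m : ℕ} (ρ : Matrix (Fin m) (Fin m) ℂ) :
    (maxCoh m * deph ρ).trace = (m : ℂ)⁻¹ * ρ.trace := by
  rw [trace_maxCoh_mul]
  congr 1
  simp [deph_apply, Matrix.trace, Matrix.diag]

lemma trace_maxCoh_std {m : ℕ} (i j : Fin m) :
    (maxCoh m * Matrix.single i j (1:ℂ)).trace = (m : ℂ)⁻¹ := by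
  rw [trace_maxCoh_mul]
  simp [Matrix.single, ite_and, Finset.sum_ite_eq, Finset.mem_univ]

lemma trace_std {m : ℕ} (i j : Fin m) :
    (Matrix.single i j (1:ℂ)).trace = if i = j then 1 else 0 := by
  by_cases h : i = j
  · subst h
    simp [Matrix.trace, Matrix.diag, Matrix.single, ite_and, Finset.sum_ite_eq]
  · simp only [Matrix.trace, Matrix.diag, Matrix.single, Matrix.of_apply, h, if_false]
    rw [Finset.sum_eq_zero]
    intro k _
    by_cases hik : i = k <;> by_cases hjk : j = k <;> simp_all

lemma psd_add {n : Type*} [Fintype n] {A B : Matrix n n ℂ}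
    (hA : A.PosSemidef) (hB : B.PosSemidef) : (A + B).PosSemidef :=
  hA.add hB

lemma kron_conjTranspose {n n' p p' : Type*} (A : Matrix n n' ℂ) (B : Matrix p p' ℂ) :
    (A ⊗ₖ B)ᴴ = Aᴴ ⊗ₖ Bᴴ := by
  ext ⟨i, j⟩ ⟨k, l⟩
  simp [conjTranspose_apply, kroneckerMap_apply, mul_comm]

lemma psd_kron {n p : Type*} [Fintype n] [DecidableEq n] [Fintype p] [DecidableEq p]
    {A : Matrix n n ℂ} {B : Matrix p p ℂ}
    (hA : A.PosSemidef) (hB : B.PosSemidef) : (A ⊗ₖ B).PosSemidef := by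
  exact hA.kronecker hB

lemma psd_real_smul {n : Type*} [Fintype n] {A : Matrix n n ℂ}
    (hA : A.PosSemidef) {r : ℝ} (hr : 0 ≤ r) : (((r : ℂ)) • A).PosSemidef := by
  refine ⟨?_, fun x => ?_⟩
  · have h2 : ((r : ℂ) • A)ᴴ = star (r : ℂ) • Aᴴ := conjTranspose_smul _ _
    rw [Matrix.IsHermitian, h2, hA.1]
    simp [Complex.star_def, Complex.conj_ofReal]
  · exact (hA.smul (a := (r : ℂ)) (Complex.zero_le_real.mpr hr)).2 x

lemma psd_maxCoh {m : ℕ} (hm : m ≠ 0) : (maxCoh m).PosSemidef := by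
  have hmc : (m : ℂ) ≠ 0 := Nat.cast_ne_zero.mpr hm
  have key : maxCoh m =
      (Matrix.of fun (_ : Fin 1) (_ : Fin m) => ((Real.sqrt ((m : ℝ)⁻¹) : ℝ) : ℂ))ᴴ *
      (Matrix.of fun (_ : Fin 1) (_ : Fin m) => ((Real.sqrt ((m : ℝ)⁻¹) : ℝ) : ℂ)) := by
    ext i j
    simp only [Matrix.mul_apply, Matrix.conjTranspose_apply, Matrix.of_apply, maxCoh,
      Complex.star_def, Complex.conj_ofReal, Fin.sum_univ_one]
    rw [← Complex.ofReal_mul, Real.mul_self_sqrt (by positivity)]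
    push_cast
    field_simp
  rw [key]
  exact posSemidef_conjTranspose_mul_self _

lemma maxCoh_mul_self {m : ℕ} (hm : m ≠ 0) : maxCoh m * maxCoh m = maxCoh m := by
  have hmc : (m : ℂ) ≠ 0 := Nat.cast_ne_zero.mpr hm
  ext i j
  simp [Matrix.mul_apply, maxCoh, Finset.sum_const, Finset.card_univ]
  field_simp

lemma psd_one_sub_maxCoh {m : ℕ} (hm : m ≠ 0) :
    ((1 : Matrix (Fin m) (Fin m) ℂ) - maxCoh m).PosSemidef := by
  have hH : ((1 : Matrix (Fin m) (Fin m) ℂ) - maxCoh m)ᴴ = 1 - maxCoh m := by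
    ext i j
    by_cases h : i = j <;>
      simp [Matrix.conjTranspose_apply, Matrix.sub_apply, Matrix.one_apply, maxCoh, h,
        eq_comm, Complex.star_def, map_div₀]
  have key : ((1 : Matrix (Fin m) (Fin m) ℂ) - maxCoh m)ᴴ * (1 - maxCoh m)
      = 1 - maxCoh m := by
    rw [hH, sub_mul, one_mul, mul_sub, mul_one, maxCoh_mul_self hm, sub_self, sub_zero]

  exact key ▸ posSemidef_conjTranspose_mul_self _


section MainParts
variable {A0 A1 : Type*} [Fintype A0] [DecidableEq A0] [Fintype A1] [DecidableEq A1]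

lemma Theta_maxCoh {m : ℕ} (hm : 2 ≤ m) (N : Matrix A0 A0 ℂ →ₗ[ℂ] Matrix A1 A1 ℂ) :
    Theta m N (maxCoh m) = N := by
  have hm0 : m ≠ 0 := by omega
  apply LinearMap.ext; intro X
  rw [Theta_apply, trace_maxCoh_sq hm0, trace_maxCoh hm0]
  simp

lemma Theta_TP {m : ℕ} (hm : 2 ≤ m) (N : Matrix A0 A0 ℂ →ₗ[ℂ] Matrix A1 A1 ℂ)
    (hTP : ∀ X, (N X).trace = X.trace)
    (ρ : Matrix (Fin m) (Fin m) ℂ) (htr : ρ.trace = 1) :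
    ∀ X, ((Theta m N ρ) X).trace = X.trace := by
  have hm1 : (m : ℂ) - 1 ≠ 0 := by
    have : (m : ℂ) ≠ 1 := by exact_mod_cast (by omega : m ≠ 1)
    exact sub_ne_zero.mpr this
  intro X
  rw [Theta_apply, htr]
  rw [Matrix.trace_add, Matrix.trace_smul, Matrix.trace_smul, Matrix.trace_sub,
    Matrix.trace_smul, trace_deph, hTP, hTP, trace_deph]
  simp only [smul_eq_mul]
  linear_combination (X.trace * (1 - (maxCoh m * ρ).trace)) * (mul_inv_cancel₀ hm1)

lemma Theta_cov {m : ℕ} (hm : 2 ≤ m) (N : Matrix A0 A0 ℂ →ₗ[ℂ] Matrix A1 A1 ℂ)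
    (ρ : Matrix (Fin m) (Fin m) ℂ) :
    deph ∘ₗ (Theta m N ρ) ∘ₗ deph = Theta m N (deph ρ) := by
  have hm0 : (m : ℂ) ≠ 0 := Nat.cast_ne_zero.mpr (by omega)
  have hm1 : (m : ℂ) - 1 ≠ 0 := by
    have : (m : ℂ) ≠ 1 := by exact_mod_cast (by omega : m ≠ 1)
    exact sub_ne_zero.mpr this
  apply LinearMap.ext; intro X
  ext k l
  simp only [LinearMap.comp_apply, Theta_apply, deph_deph, trace_maxCoh_deph, trace_deph]
  by_cases hkl : k = l <;>
    simp only [deph_apply, Matrix.add_apply, Matrix.smul_apply, Matrix.sub_apply,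
      smul_eq_mul, hkl, if_true, if_false] <;>
  · field_simp
    ring

lemma deph_std {ι : Type*} [DecidableEq ι] (i j : ι) :
    deph (Matrix.single i j (1:ℂ)) =
      if i = j then Matrix.single i j 1 else 0 := by
  ext a b
  by_cases hij : i = j <;> by_cases hab : a = b <;>
    simp [deph_apply, Matrix.single, hij, hab] <;> aesop

lemma choi_key {m : ℕ} (N : Matrix A0 A0 ℂ →ₗ[ℂ] Matrix A1 A1 ℂ) :
    choi ((m : ℂ) • (deph ∘ₗ N ∘ₗ deph) - N) = (m : ℂ) • deph (choi N) - choi N := by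
  ext ⟨i, k⟩ ⟨j, l⟩
  simp only [choi, Matrix.of_apply, LinearMap.sub_apply, LinearMap.smul_apply,
    LinearMap.comp_apply, Matrix.sub_apply, Matrix.smul_apply, smul_eq_mul, deph_apply,
    deph_std, Matrix.smul_apply]
  by_cases hij : i = j <;> by_cases hkl : k = l <;>
    simp [hij, hkl, Prod.ext_iff, deph_apply]

end MainParts


section MainParts2
variable {A0 A1 : Type*} [Fintype A0] [DecidableEq A0] [Fintype A1] [DecidableEq A1]

lemma choi_Theta {m : ℕ} (hm : 2 ≤ m) (N : Matrix A0 A0 ℂ →ₗ[ℂ] Matrix A1 A1 ℂ) :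
    choi (choiMapOf (Theta m N)) = maxCoh m ⊗ₖ choi N +
      ((((m : ℂ) - 1)⁻¹) • ((1 : Matrix (Fin m) (Fin m) ℂ) - maxCoh m)) ⊗ₖ
        choi ((m : ℂ) • (deph ∘ₗ N ∘ₗ deph) - N) := by
  ext ⟨i, r⟩ ⟨j, s⟩
  simp only [choi, choiMapOf, Matrix.of_apply, LinearMap.coe_mk, AddHom.coe_mk,
    Matrix.add_apply, kroneckerMap_apply, Matrix.smul_apply, Matrix.sub_apply,
    Matrix.one_apply, maxCoh, smul_eq_mul]
  rw [Theta_apply, trace_maxCoh_std, trace_std]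
  simp only [LinearMap.sub_apply, LinearMap.smul_apply, LinearMap.comp_apply,
    Matrix.add_apply, Matrix.smul_apply, Matrix.sub_apply, smul_eq_mul]
  by_cases hij : i = j <;> simp [hij] <;> ring

lemma Theta_CP {m : ℕ} (hm : 2 ≤ m) (N : Matrix A0 A0 ℂ →ₗ[ℂ] Matrix A1 A1 ℂ)
    (hCP : (choi N).PosSemidef)
    (hrob : ((m : ℝ) • deph (choi N) - choi N).PosSemidef) :
    (choi (choiMapOf (Theta m N))).PosSemidef := by
  have hm0 : m ≠ 0 := by omega
  rw [choi_Theta hm N, choi_key N]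
  have hK : ((m : ℂ) • deph (choi N) - choi N).PosSemidef := by
    have : (m : ℂ) • deph (choi N) = (m : ℝ) • deph (choi N) := by
      ext p q
      simp [Matrix.smul_apply, Complex.real_smul]
    rw [this]
    exact hrob
  have hc : (((m : ℂ) - 1)⁻¹) • ((1 : Matrix (Fin m) (Fin m) ℂ) - maxCoh m)
      = (((((m : ℝ) - 1)⁻¹ : ℝ)) : ℂ) • ((1 : Matrix (Fin m) (Fin m) ℂ) - maxCoh m) := by
    push_cast
    rfl
  refine psd_add (psd_kron (psd_maxCoh hm0) hCP) (psd_kron ?_ hK)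
  rw [hc]
  exact psd_real_smul (psd_one_sub_maxCoh hm0)
    (inv_nonneg.mpr (by
      have h2 : (2:ℝ) ≤ (m:ℝ) := by exact_mod_cast hm
      linarith))

end MainParts2

/-- Upper bound on the exact single-shot DISC coherence cost: if
`m • 𝒟_full(J(N)) ≥ J(N)` then there is a dephasing-covariant state-to-channel
supermap on an `m`-dimensional coherence resource that simulates `N`. -/
theorem exists_DISC_simulation
    {m : ℕ} (hm : 2 ≤ m)
    {A0 A1 : Type*}
    [Fintype A0] [DecidableEq A0] [Nonempty A0]
    [Fintype A1] [DecidableEq A1] [Nonempty A1]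
    (N : Matrix A0 A0 ℂ →ₗ[ℂ] Matrix A1 A1 ℂ) (hN : IsChannel N)
    (hrob : ((m : ℝ) • deph (choi N) - choi N).PosSemidef) :
    ∃ Θ : Matrix (Fin m) (Fin m) ℂ →ₗ[ℂ] (Matrix A0 A0 ℂ →ₗ[ℂ] Matrix A1 A1 ℂ),
      (choi (choiMapOf Θ)).PosSemidef ∧
      (∀ ρ : Matrix (Fin m) (Fin m) ℂ, ρ.PosSemidef → ρ.trace = 1 → IsTP (Θ ρ)) ∧
      (∀ ρ : Matrix (Fin m) (Fin m) ℂ, deph ∘ₗ (Θ ρ) ∘ₗ deph = Θ (deph ρ)) ∧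
      Θ (maxCoh m) = N := by
  exact ⟨Theta m N, Theta_CP hm N hN.1 hrob,
    fun ρ _ htr => Theta_TP hm N hN.2 ρ htr,
    fun ρ => Theta_cov hm N ρ, Theta_maxCoh hm N⟩

end
end

section
/- Let d ≥ 1 and n ≥ 1 be natural numbers and λ ∈ ℝ with 0 ≤ λ ≤ 1. Let J_dep ∈ Matrix (Fin d × Fin d) (Fin d × Fin d) ℂ be the Choi matrix of the partially depolarizing channel: J_dep = λ • Φ⁺ + ((1−λ)/d) • 1, where Φ⁺ (i,p) (j,q) = if i = p ∧ j = q then 1 else 0 (the unnormalized maximally entangled matrix Σ_{i,j} |ii⟩⟨jj|). Consider the feasible set S of matrices α ∈ Matrix (Fin d × Fin d) (Fin d × Fin d) ℂ for which there exists ρ ∈ Matrix (Fin d) (Fin d) ℂ with: ρ.PosSemidef, trace ρ = 1, α.PosSemidef, (ρ ⊗ₖ 1 − α).PosSemidef, and 𝒟_{full}(α) = (1/n) • (𝒟(ρ) ⊗ₖ 1). Then the value sup_{α ∈ S} (trace (αᵀ * J_dep)).re is attained and equals λ + (1−λ)/n when n ≤ d, and equals ((1−λ) + λ·d)/n when d ≤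 n; i.e., this real number is the greatest element of { (trace (αᵀ * J_dep)).re : α ∈ S }. -/
open Matrix Kronecker ComplexOrder

noncomputable section

/-- Dephasing: keep only diagonal entries. -/
def dephM {ι : Type*} [DecidableEq ι] (M : Matrix ι ι ℂ) : Matrix ι ι ℂ :=
  Matrix.of fun i j => if i = j then M i j else 0

/-- The unnormalized maximally entangled matrix `Φ⁺ = Σ_{i,j} |ii⟩⟨jj|`. -/
def phiPlus (d : ℕ) : Matrix (Fin d × Fin d) (Fin d × Fin d) ℂ :=
  Matrix.of fun p q => if p.1 = p.2 ∧ q.1 = q.2 then 1 else 0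

open Finset in
section
set_option linter.unusedSectionVars false
set_option linter.unusedVariables false
set_option maxHeartbeats 1600000

section Helpers
variable {ι : Type*} [Fintype ι] [DecidableEq ι]

lemma quad_im_eq_zero {M : Matrix ι ι ℂ} (h : M.IsHermitian) (x : ι → ℂ) :
    (star x ⬝ᵥ M.mulVec x).im = 0 := by
  rw [← Complex.conj_eq_iff_im]
  calc (starRingEnd ℂ) (star x ⬝ᵥ M.mulVec x)
      = star (star x ⬝ᵥ M.mulVec x) := rfl
    _ = star (M.mulVec x) ⬝ᵥ star (star x) := by rw [← star_dotProduct_star]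
    _ = star x ⬝ᵥ M.mulVec x := by
        rw [star_star, star_mulVec, h.eq, ← dotProduct_mulVec]

lemma posSemidef_of_re {M : Matrix ι ι ℂ} (h : M.IsHermitian)
    (hq : ∀ x, 0 ≤ (star x ⬝ᵥ M.mulVec x).re) : M.PosSemidef := by
  refine Matrix.PosSemidef.of_dotProduct_mulVec_nonneg h fun x => ?_
  rw [Complex.le_def]
  exact ⟨by simpa using hq x, by simp [quad_im_eq_zero h x]⟩

lemma quad_expand (M : Matrix ι ι ℂ) (x : ι → ℂ) :
    star x ⬝ᵥ M.mulVec x = ∑ i, ∑ j, (starRingEnd ℂ) (x i) * (M i j * x j) := by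
  simp [dotProduct, Matrix.mulVec, Finset.mul_sum]

lemma cs_normSq (s : Finset ι) (w x : ι → ℂ) :
    Complex.normSq (∑ i ∈ s, (starRingEnd ℂ) (w i) * x i) ≤
      (∑ i ∈ s, Complex.normSq (w i)) * ∑ i ∈ s, Complex.normSq (x i) := by
  have h1 : ‖(∑ i ∈ s, (starRingEnd ℂ) (w i) * x i)‖ ≤
      ∑ i ∈ s, ‖(w i)‖ * ‖(x i)‖ := by
    refine (norm_sum_le _ _).trans_eq ?_
    simp [norm_mul]
  have h2 := Finset.sum_mul_sq_le_sq_mul_sq s (fun i => ‖(w i)‖)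
      (fun i => ‖(x i)‖)
  calc Complex.normSq (∑ i ∈ s, (starRingEnd ℂ) (w i) * x i)
      = ‖(∑ i ∈ s, (starRingEnd ℂ) (w i) * x i)‖ ^ 2 := (Complex.sq_norm _).symm
    _ ≤ (∑ i ∈ s, ‖(w i)‖ * ‖(x i)‖) ^ 2 := by
        exact pow_le_pow_left₀ (norm_nonneg _) h1 2
    _ ≤ (∑ i ∈ s, ‖(w i)‖ ^ 2) * ∑ i ∈ s, ‖(x i)‖ ^ 2 := h2
    _ = _ := by simp [Complex.sq_norm]

lemma vecMulVec_mulVec (w v x : ι → ℂ) :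
    (Matrix.vecMulVec w v).mulVec x = (∑ j, v j * x j) • w := by
  ext i
  simp [Matrix.vecMulVec, Matrix.mulVec, dotProduct, Finset.sum_mul, Finset.mul_sum, mul_comm,
    mul_assoc, mul_left_comm]

lemma quad_outer (w x : ι → ℂ) :
    star x ⬝ᵥ (Matrix.vecMulVec w (star w)).mulVec x =
      (Complex.normSq (∑ i, (starRingEnd ℂ) (w i) * x i) : ℂ) := by
  rw [_root_.vecMulVec_mulVec, dotProduct_smul]
  simp only [dotProduct, Pi.star_apply, smul_eq_mul]
  have hc : (∑ i, star (x i) * w i) = (starRingEnd ℂ) (∑ i, star (w i) * x i) := by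
    rw [map_sum]; congr 1; funext i
    simp only [_root_.map_mul, Complex.star_def, Complex.conj_conj]; ring
  rw [hc, Complex.mul_conj]
  rfl

lemma vecMulVec_star_isHermitian (w : ι → ℂ) :
    (Matrix.vecMulVec w (star w)).IsHermitian := by
  ext i j
  simp [Matrix.vecMulVec, Matrix.conjTranspose_apply, mul_comm]

lemma smul_outer_psd (r : ℝ) (hr : 0 ≤ r) (w : ι → ℂ) :
    (r • Matrix.vecMulVec w (star w)).PosSemidef := by
  have hh : (r • Matrix.vecMulVec w (star w)).IsHermitian := by
    ext i j
    simp [Matrix.conjTranspose_apply, Matrix.vecMulVec, mul_comm]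
  refine Matrix.PosSemidef.of_dotProduct_mulVec_nonneg hh fun x => ?_
  have : star x ⬝ᵥ (r • Matrix.vecMulVec w (star w)).mulVec x =
      r • (star x ⬝ᵥ (Matrix.vecMulVec w (star w)).mulVec x) := by
    rw [Matrix.smul_mulVec, dotProduct_smul]
  rw [this, quad_outer]
  rw [Complex.le_def]
  constructor
  · simp only [Complex.smul_re, Complex.ofReal_re, Complex.zero_re]
    exact mul_nonneg hr (Complex.normSq_nonneg _)
  · simp [Complex.smul_im]

lemma diag_sub_outer_psd (P : ι → Prop) [DecidablePred P] (r c : ℝ) (hr : 0 ≤ r)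
    (hb : r * (Finset.univ.filter P).card ≤ c) :
    (Matrix.diagonal (fun i => if P i then (c:ℂ) else 0)
      - r • Matrix.vecMulVec (fun i => if P i then (1:ℂ) else 0)
          (star fun i => if P i then (1:ℂ) else 0)).PosSemidef := by
  set w : ι → ℂ := fun i => if P i then (1:ℂ) else 0 with hw
  have hherm : (Matrix.diagonal (fun i => if P i then (c:ℂ) else 0)
      - r • Matrix.vecMulVec w (star w)).IsHermitian := by
    ext i j
    rcases eq_or_ne i j with rfl | hij
    · by_cases h1 : P i <;>
        simp [Matrix.conjTranspose_apply, Matrix.diagonal_apply, Matrix.vecMulVec, w, h1]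
    · by_cases h1 : P i <;> by_cases h2 : P j <;>
        simp [Matrix.conjTranspose_apply, Matrix.diagonal_apply, Matrix.vecMulVec, w, h1, h2,
          hij, Ne.symm hij, mul_comm]
  refine posSemidef_of_re hherm fun x => ?_
  have hsplit : star x ⬝ᵥ (Matrix.diagonal (fun i => if P i then (c:ℂ) else 0)
      - r • Matrix.vecMulVec w (star w)).mulVec x =
      star x ⬝ᵥ (Matrix.diagonal (fun i => if P i then (c:ℂ) else 0)).mulVec x
      - r • (star x ⬝ᵥ (Matrix.vecMulVec w (star w)).mulVec x) := by
    rw [Matrix.sub_mulVec, dotProduct_sub, Matrix.smul_mulVec, dotProduct_smul]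
  have hz : (∑ i, (starRingEnd ℂ) (w i) * x i) = ∑ i ∈ Finset.univ.filter P, x i := by
    rw [Finset.sum_filter]
    congr 1; funext i
    by_cases h1 : P i <;> simp [w, h1]
  have hdiag : star x ⬝ᵥ (Matrix.diagonal (fun i => if P i then (c:ℂ) else 0)).mulVec x =
      ((c * ∑ i ∈ Finset.univ.filter P, Complex.normSq (x i) : ℝ) : ℂ) := by
    simp only [dotProduct, Matrix.mulVec_diagonal, Pi.star_apply, Complex.star_def]
    push_cast
    rw [Finset.mul_sum, Finset.sum_filter]
    congr 1; funext i
    by_cases h1 : P i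
    · simp only [h1, if_true]
      rw [Complex.normSq_eq_conj_mul_self]
      ring
    · simp [h1]
  rw [hsplit, hdiag, quad_outer, hz]
  have key : r * Complex.normSq (∑ i ∈ Finset.univ.filter P, x i) ≤
      c * ∑ i ∈ Finset.univ.filter P, Complex.normSq (x i) := by
    have h1 : Complex.normSq (∑ i ∈ Finset.univ.filter P, x i) ≤
        (Finset.univ.filter P).card * ∑ i ∈ Finset.univ.filter P, Complex.normSq (x i) := by
      have := cs_normSq (Finset.univ.filter P) (fun _ => (1:ℂ)) x
      simpa using this
    have hS : (0:ℝ) ≤ ∑ i ∈ Finset.univ.filter P, Complex.normSq (x i) :=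
      Finset.sum_nonneg fun i _ => Complex.normSq_nonneg _
    calc r * Complex.normSq (∑ i ∈ Finset.univ.filter P, x i)
        ≤ r * ((Finset.univ.filter P).card * ∑ i ∈ Finset.univ.filter P, Complex.normSq (x i)) :=
          mul_le_mul_of_nonneg_left h1 hr
      _ = r * (Finset.univ.filter P).card * ∑ i ∈ Finset.univ.filter P, Complex.normSq (x i) := by
          ring
      _ ≤ c * ∑ i ∈ Finset.univ.filter P, Complex.normSq (x i) :=
          mul_le_mul_of_nonneg_right hb hS
  simp only [Complex.sub_re, Complex.smul_re, Complex.ofReal_re, Complex.zero_re, smul_eq_mul]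
  linarith

end Helpers

lemma sum_diag_ite {d : ℕ} (f : Fin d × Fin d → ℂ) :
    (∑ p : Fin d × Fin d, if p.1 = p.2 then f p else 0) = ∑ i : Fin d, f (i, i) := by
  rw [Fintype.sum_prod_type]
  simp [Finset.sum_ite_eq]

lemma trace_obj (d : ℕ) (lam : ℝ) (α : Matrix (Fin d × Fin d) (Fin d × Fin d) ℂ) :
    ((αᵀ * (lam • phiPlus d + ((1 - lam) / (d : ℝ)) •
        (1 : Matrix (Fin d × Fin d) (Fin d × Fin d) ℂ))).trace)
      = (lam : ℂ) * (∑ i : Fin d, ∑ j : Fin d, α (i,i) (j,j))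
        + (((1 - lam) / (d : ℝ) : ℝ) : ℂ) * α.trace := by
  have hexp : (αᵀ * (lam • phiPlus d + ((1 - lam) / (d : ℝ)) •
        (1 : Matrix (Fin d × Fin d) (Fin d × Fin d) ℂ))).trace
      = ∑ p : Fin d × Fin d, ∑ q : Fin d × Fin d,
          α q p * ((lam : ℂ) * phiPlus d q p
            + (((1 - lam) / (d : ℝ) : ℝ) : ℂ) * (1 : Matrix (Fin d × Fin d) (Fin d × Fin d) ℂ) q p) := by
    simp only [Matrix.trace, Matrix.diag_apply, Matrix.mul_apply, Matrix.transpose_apply,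
      Matrix.add_apply, Matrix.smul_apply, Complex.real_smul]
  rw [hexp]
  have hA : ∀ p : Fin d × Fin d,
      (∑ q : Fin d × Fin d, α q p * phiPlus d q p)
        = if p.1 = p.2 then (∑ i : Fin d, α (i, i) p) else 0 := by
    intro p
    by_cases hp : p.1 = p.2
    · simp only [phiPlus, Matrix.of_apply, hp, and_true, mul_ite, mul_one, mul_zero, if_true]
      exact sum_diag_ite (fun q => α q p)
    · simp [phiPlus, hp]
  have hB : ∀ p : Fin d × Fin d,
      (∑ q : Fin d × Fin d, α q p * (1 : Matrix (Fin d × Fin d) (Fin d × Fin d) ℂ) q p)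
        = α p p := by
    intro p
    simp [Matrix.one_apply, Finset.sum_ite_eq']
  calc ∑ p : Fin d × Fin d, ∑ q : Fin d × Fin d,
          α q p * ((lam : ℂ) * phiPlus d q p
            + (((1 - lam) / (d : ℝ) : ℝ) : ℂ) * (1 : Matrix (Fin d × Fin d) (Fin d × Fin d) ℂ) q p)
      = ∑ p : Fin d × Fin d, ((lam : ℂ) * ∑ q, α q p * phiPlus d q p)
          + ∑ p : Fin d × Fin d, ((((1 - lam) / (d : ℝ) : ℝ) : ℂ) * ∑ q, α q p * (1 : Matrix (Fin d × Fin d) (Fin d × Fin d) ℂ) q p) := by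
        rw [← Finset.sum_add_distrib]
        congr 1; funext p
        rw [Finset.mul_sum, Finset.mul_sum, ← Finset.sum_add_distrib]
        congr 1; funext q
        ring
    _ = (lam : ℂ) * (∑ i : Fin d, ∑ j : Fin d, α (i,i) (j,j))
        + (((1 - lam) / (d : ℝ) : ℝ) : ℂ) * α.trace := by
        congr 1
        · rw [← Finset.mul_sum]
          congr 1
          have : ∀ p : Fin d × Fin d, ((∑ q, α q p * phiPlus d q p) : ℂ)
              = if p.1 = p.2 then (∑ i : Fin d, α (i, i) p) else 0 := hA
          rw [Finset.sum_congr rfl (fun p _ => this p), sum_diag_ite]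
          rw [Finset.sum_comm]
        · rw [← Finset.mul_sum]
          congr 1
          rw [Finset.sum_congr rfl (fun p _ => hB p)]
          rfl

section Helpers2
variable {ι : Type*} [Fintype ι] [DecidableEq ι]

lemma quad_single (M : Matrix ι ι ℂ) (a b : ι) :
    star (Pi.single a (1:ℂ)) ⬝ᵥ M.mulVec (Pi.single b 1) = M a b := by
  simp [dotProduct, Matrix.mulVec, Pi.single_apply, apply_ite, mul_ite, ite_mul,
    Finset.sum_ite_eq, Finset.sum_ite_eq', Finset.mul_sum]

lemma quad_pair (M : Matrix ι ι ℂ) (p q : ι) :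
    star (Pi.single p (1:ℂ) - Pi.single q 1) ⬝ᵥ M.mulVec (Pi.single p 1 - Pi.single q 1)
      = M p p + M q q - M p q - M q p := by
  rw [star_sub, Matrix.mulVec_sub, dotProduct_sub, sub_dotProduct, sub_dotProduct,
    quad_single, quad_single, quad_single, quad_single]
  ring

lemma offdiag_re_le (M : Matrix ι ι ℂ) (hM : M.PosSemidef) (p q : ι) :
    (M p q).re ≤ ((M p p).re + (M q q).re) / 2 := by
  rcases eq_or_ne p q with rfl | hpq
  · linarith [le_refl (M p p).re]
  · have h := hM.dotProduct_mulVec_nonneg (Pi.single p 1 - Pi.single q 1)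
    rw [quad_pair] at h
    have hre : 0 ≤ (M p p + M q q - M p q - M q p).re := by
      rw [Complex.le_def] at h; exact h.1
    have hconj : M q p = (starRingEnd ℂ) (M p q) := by
      have := hM.1
      rw [Matrix.IsHermitian] at this
      conv_lhs => rw [← this]
      simp [Matrix.conjTranspose_apply]
    rw [hconj] at hre
    simp only [Complex.sub_re, Complex.add_re, Complex.conj_re] at hre
    linarith

end Helpers2

lemma upper_bounds_main (d n : ℕ) (hd : 1 ≤ d) (hn : 1 ≤ n) (lam : ℝ)
    (h0 : 0 ≤ lam) (h1 : lam ≤ 1)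
    (α : Matrix (Fin d × Fin d) (Fin d × Fin d) ℂ) (ρ : Matrix (Fin d) (Fin d) ℂ)
    (hρ : ρ.PosSemidef) (htr : ρ.trace = 1) (hα : α.PosSemidef)
    (hdiff : (ρ ⊗ₖ (1 : Matrix (Fin d) (Fin d) ℂ) - α).PosSemidef)
    (hdeph : dephM α = ((1:ℝ)/(n:ℝ)) • (dephM ρ ⊗ₖ (1 : Matrix (Fin d) (Fin d) ℂ))) :
    ((αᵀ * (lam • phiPlus d + ((1 - lam) / (d : ℝ)) •
        (1 : Matrix (Fin d × Fin d) (Fin d × Fin d) ℂ))).trace).re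
      ≤ lam + (1 - lam) / (n : ℝ)
    ∧ ((αᵀ * (lam • phiPlus d + ((1 - lam) / (d : ℝ)) •
        (1 : Matrix (Fin d × Fin d) (Fin d × Fin d) ℂ))).trace).re
      ≤ ((1 - lam) + lam * (d : ℝ)) / (n : ℝ) := by
  have hdpos : (0:ℝ) < d := by exact_mod_cast hd
  have hnpos : (0:ℝ) < n := by exact_mod_cast hn
  -- diagonal entries of α
  have hdiag : ∀ p : Fin d × Fin d, α p p = ((1:ℝ)/(n:ℝ)) • ρ p.1 p.1 := by
    intro p
    have := congrFun (congrFun hdeph p) p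
    simp only [dephM, Matrix.of_apply, if_pos rfl, if_true, Matrix.smul_apply,
      Matrix.kroneckerMap_apply, Matrix.one_apply_eq, mul_one] at this
    rw [this]
  -- trace of α
  have htrα : α.trace = (((d:ℝ)/(n:ℝ) : ℝ) : ℂ) := by
    rw [Matrix.trace]
    have : ∀ p : Fin d × Fin d, α.diag p = ((1:ℝ)/(n:ℝ)) • ρ p.1 p.1 := fun p => hdiag p
    rw [Finset.sum_congr rfl (fun p _ => this p), Fintype.sum_prod_type]
    simp only [Finset.sum_const, Finset.card_univ, Fintype.card_fin, nsmul_eq_mul]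
    calc ∑ x : Fin d, (d:ℂ) * ((1:ℝ)/(n:ℝ)) • ρ x x
        = ((d:ℂ)/(n:ℂ)) * ∑ x : Fin d, ρ x x := by
          rw [Finset.mul_sum]; congr 1; funext x
          rw [Complex.real_smul]; push_cast; ring
      _ = ((d:ℂ)/(n:ℂ)) * ρ.trace := rfl
      _ = _ := by rw [htr]; push_cast; ring
  set T : ℂ := ∑ i : Fin d, ∑ j : Fin d, α (i,i) (j,j) with hT
  have hTre : T.re = ∑ i : Fin d, ∑ j : Fin d, (α (i,i) (j,j)).re := by
    rw [hT, Complex.re_sum]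
    exact Finset.sum_congr rfl fun i _ => Complex.re_sum _ _
  have hαdiag_re : ∀ p : Fin d × Fin d, (α p p).re = (1/(n:ℝ)) * (ρ p.1 p.1).re := by
    intro p; rw [hdiag p, Complex.smul_re, smul_eq_mul]
  have hρdiag_sum : ∑ i : Fin d, (ρ i i).re = 1 := by
    have h' : (ρ.trace).re = 1 := by rw [htr]; simp
    rw [← h', Matrix.trace, Complex.re_sum]
    rfl
  -- bound T.re ≤ d / n
  have hsum_diag : ∑ i : Fin d, (α (i,i) (i,i)).re = 1/(n:ℝ) := by
    rw [Finset.sum_congr rfl (fun i _ => hαdiag_re (i,i)), ← Finset.mul_sum, hρdiag_sum, mul_one]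
  have hT2 : T.re ≤ (d:ℝ)/(n:ℝ) := by
    rw [hTre]
    have hb : ∑ i : Fin d, ∑ j : Fin d, (α (i,i) (j,j)).re
        ≤ ∑ i : Fin d, ∑ j : Fin d, ((α (i,i) (i,i)).re + (α (j,j) (j,j)).re)/2 :=
      Finset.sum_le_sum fun i _ => Finset.sum_le_sum fun j _ => offdiag_re_le α hα _ _
    refine hb.trans ?_
    set a : Fin d → ℝ := fun i => (α (i,i) (i,i)).re with ha
    have h1 : ∀ i : Fin d, ∑ j : Fin d, (a i + a j)/2 = ((d:ℝ) * a i + ∑ j : Fin d, a j)/2 := by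
      intro i
      rw [← Finset.sum_div]
      congr 1
      rw [Finset.sum_add_distrib, Finset.sum_const, Finset.card_univ, Fintype.card_fin,
        nsmul_eq_mul]
    have h2 : ∑ i : Fin d, ∑ j : Fin d, (a i + a j)/2 = (d:ℝ) * ∑ i : Fin d, a i := by
      rw [Finset.sum_congr rfl (fun i _ => h1 i), ← Finset.sum_div, Finset.sum_add_distrib,
        ← Finset.mul_sum, Finset.sum_const, Finset.card_univ, Fintype.card_fin, nsmul_eq_mul]
      ring
    rw [h2, hsum_diag]
    rw [div_eq_mul_inv, div_eq_mul_inv, one_mul]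
  -- bound T.re ≤ 1
  set v : Fin d × Fin d → ℂ := fun p => if p.1 = p.2 then 1 else 0 with hv
  have hαv : star v ⬝ᵥ α.mulVec v = T := by
    rw [quad_expand, hT]
    have hout : ∀ p : Fin d × Fin d, ∑ q : Fin d × Fin d, (starRingEnd ℂ) (v p) * (α p q * v q)
        = if p.1 = p.2 then (∑ q : Fin d × Fin d, if q.1 = q.2 then α p q else 0) else 0 := by
      intro p
      by_cases hp : p.1 = p.2
      · simp only [hv, hp, if_true]
        congr 1; funext q
        by_cases hq : q.1 = q.2 <;> simp [hq]
      · simp [hv, hp]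
    rw [Finset.sum_congr rfl (fun p _ => hout p), sum_diag_ite]
    exact Finset.sum_congr rfl fun i _ => sum_diag_ite _
  have hρv : star v ⬝ᵥ (ρ ⊗ₖ (1 : Matrix (Fin d) (Fin d) ℂ)).mulVec v = 1 := by
    rw [quad_expand]
    have hout : ∀ p : Fin d × Fin d,
        ∑ q : Fin d × Fin d, (starRingEnd ℂ) (v p)
          * ((ρ ⊗ₖ (1 : Matrix (Fin d) (Fin d) ℂ)) p q * v q)
        = if p.1 = p.2
          then (∑ q : Fin d × Fin d, if q.1 = q.2
            then (ρ ⊗ₖ (1 : Matrix (Fin d) (Fin d) ℂ)) p q else 0) else 0 := by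
      intro p
      by_cases hp : p.1 = p.2
      · simp only [hv, hp, if_true]
        congr 1; funext q
        by_cases hq : q.1 = q.2 <;> simp [hq]
      · simp [hv, hp]
    rw [Finset.sum_congr rfl (fun p _ => hout p), sum_diag_ite]
    have hinner : ∀ i : Fin d,
        (∑ q : Fin d × Fin d, if q.1 = q.2
          then (ρ ⊗ₖ (1 : Matrix (Fin d) (Fin d) ℂ)) (i,i) q else 0) = ρ i i := by
      intro i
      rw [sum_diag_ite]
      have : ∀ j : Fin d, (ρ ⊗ₖ (1 : Matrix (Fin d) (Fin d) ℂ)) (i,i) (j,j)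
          = if i = j then ρ i j else 0 := by
        intro j
        by_cases hij : i = j <;>
          simp [Matrix.kroneckerMap_apply, Matrix.one_apply, hij]
      rw [Finset.sum_congr rfl (fun j _ => this j), Finset.sum_ite_eq]
      simp
    rw [Finset.sum_congr rfl (fun i _ => hinner i)]
    exact htr
  have hT1 : T.re ≤ 1 := by
    have h := hdiff.dotProduct_mulVec_nonneg v
    rw [Matrix.sub_mulVec, dotProduct_sub, hαv, hρv, Complex.le_def] at h
    have := h.1
    simp only [Complex.sub_re, Complex.one_re, Complex.zero_re] at this
    linarith
  have hTnn : 0 ≤ T.re := by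
    have h := hα.dotProduct_mulVec_nonneg v
    rw [hαv, Complex.le_def] at h
    simpa using h.1
  -- objective value
  rw [trace_obj, htrα]
  have hcast : ((((1:ℝ) - lam)/(d:ℝ) : ℝ):ℂ) * (((d:ℝ)/(n:ℝ) : ℝ):ℂ)
      = ((((1:ℝ)-lam)/(n:ℝ) : ℝ):ℂ) := by
    rw [← Complex.ofReal_mul]
    congr 1
    field_simp
  rw [← hT, hcast]
  have hre : ((lam:ℂ) * T + ((((1:ℝ)-lam)/(n:ℝ) : ℝ):ℂ)).re
      = lam * T.re + (1-lam)/(n:ℝ) := by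
    simp [Complex.add_re, Complex.mul_re]
  rw [hre]
  constructor
  · have := mul_le_mul_of_nonneg_left hT1 h0
    linarith
  · have hmul := mul_le_mul_of_nonneg_left hT2 h0
    have heq : ((1:ℝ) - lam + lam * (d:ℝ))/(n:ℝ) = (1-lam)/(n:ℝ) + lam * ((d:ℝ)/(n:ℝ)) := by
      field_simp
    rw [heq]
    linarith

lemma card_filter_val_lt (d n : ℕ) (hnd : n ≤ d) :
    (Finset.univ.filter fun i : Fin d => i.val < n).card = n := by
  rw [Finset.card_filter]
  rw [Fin.sum_univ_eq_sum_range (fun i => if i < n then 1 else 0) d]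
  rw [← Finset.card_filter]
  have : (Finset.range d).filter (fun i => i < n) = Finset.range n := by
    ext x; simp; omega
  rw [this, Finset.card_range]

lemma card_filter_diag_lt (d n : ℕ) (hnd : n ≤ d) :
    (Finset.univ.filter fun p : Fin d × Fin d => p.1 = p.2 ∧ p.1.val < n).card = n := by
  rw [Finset.card_filter, Fintype.sum_prod_type]
  have h1 : ∀ i : Fin d, (∑ k : Fin d, if i = k ∧ i.val < n then 1 else 0)
      = if i.val < n then 1 else 0 := by
    intro i
    simp only [ite_and]
    rw [Finset.sum_ite_eq]
    simp
  have h2 : ∀ i : Fin d, (∑ k : Fin d, if (i, k).1 = (i, k).2 ∧ (i, k).1.val < n then 1 else 0)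
      = if i.val < n then 1 else 0 := h1
  rw [Finset.sum_congr rfl (fun i _ => h2 i), ← Finset.card_filter, card_filter_val_lt d n hnd]

section Case1
variable (d n : ℕ)

def wv : Fin d × Fin d → ℂ :=
  fun p => if p.1 = p.2 ∧ p.1.val < n then (1:ℂ) else 0

def αone : Matrix (Fin d × Fin d) (Fin d × Fin d) ℂ :=
  (((n:ℝ))⁻¹ * ((n:ℝ))⁻¹) • Matrix.vecMulVec (wv d n) (star (wv d n))
    + Matrix.diagonal (fun p => if p.1.val < n ∧ p.1 ≠ p.2
        then (((((n:ℝ))⁻¹ * ((n:ℝ))⁻¹ : ℝ)):ℂ) else 0)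

def ρone : Matrix (Fin d) (Fin d) ℂ :=
  Matrix.diagonal (fun i => if i.val < n then ((((n:ℝ))⁻¹:ℝ):ℂ) else 0)

lemma case1_feasible (hd : 1 ≤ d) (hn : 1 ≤ n) (hnd : n ≤ d) :
    (ρone d n).PosSemidef ∧ (ρone d n).trace = 1 ∧ (αone d n).PosSemidef ∧
      ((ρone d n) ⊗ₖ (1 : Matrix (Fin d) (Fin d) ℂ) - αone d n).PosSemidef ∧
      dephM (αone d n) = ((1 : ℝ) / (n : ℝ)) •
        (dephM (ρone d n) ⊗ₖ (1 : Matrix (Fin d) (Fin d) ℂ)) := by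
  have hnR : (0:ℝ) < n := by exact_mod_cast hn
  refine ⟨?_, ?_, ?_, ?_, ?_⟩
  · exact Matrix.PosSemidef.diagonal (fun i => by
      dsimp only; split <;> simp [Complex.le_def, inv_nonneg.mpr hnR.le])
  · rw [ρone, Matrix.trace_diagonal]
    rw [← Finset.sum_filter, Finset.sum_const, card_filter_val_lt d n hnd, nsmul_eq_mul]
    have hne : (n:ℂ) ≠ 0 := by exact_mod_cast hnR.ne'
    push_cast
    field_simp
  · refine Matrix.PosSemidef.add (smul_outer_psd _ (by positivity) _)
      (Matrix.PosSemidef.diagonal (fun p => ?_))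
    dsimp only
    split
    · rw [Complex.le_def]
      constructor
      · simp; positivity
      · simp
    · exact le_refl 0
  · -- difference PSD
    have hr : (0:ℝ) ≤ (n:ℝ)⁻¹ * (n:ℝ)⁻¹ := by positivity
    have hb : ((n:ℝ)⁻¹ * (n:ℝ)⁻¹) *
        ((Finset.univ.filter fun p : Fin d × Fin d => p.1 = p.2 ∧ p.1.val < n).card : ℝ)
        ≤ (n:ℝ)⁻¹ := by
      rw [card_filter_diag_lt d n hnd]
      have : ((n:ℝ)⁻¹ * (n:ℝ)⁻¹) * (n:ℝ) = (n:ℝ)⁻¹ := by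
        field_simp
      rw [this]
    have hkey := diag_sub_outer_psd (fun p : Fin d × Fin d => p.1 = p.2 ∧ p.1.val < n)
        ((n:ℝ)⁻¹ * (n:ℝ)⁻¹) ((n:ℝ)⁻¹) hr hb
    have hBnn : (0:ℝ) ≤ (n:ℝ)⁻¹ - (n:ℝ)⁻¹ * (n:ℝ)⁻¹ := by
      have h1n : (1:ℝ) ≤ (n:ℝ) := by exact_mod_cast hn
      have : (n:ℝ)⁻¹ ≤ 1 := by
        rw [inv_le_one_iff₀]; right; exact h1n
      nlinarith [inv_nonneg.mpr (le_trans zero_le_one h1n)]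
    have hdiagB : (Matrix.diagonal (fun p : Fin d × Fin d =>
        if p.1.val < n ∧ p.1 ≠ p.2
          then ((((n:ℝ)⁻¹ - (n:ℝ)⁻¹*(n:ℝ)⁻¹ : ℝ)):ℂ) else 0)).PosSemidef := by
      refine Matrix.PosSemidef.diagonal (fun p => ?_)
      dsimp only
      split
      · rw [Complex.le_def]
        refine ⟨by simpa using hBnn, by simp⟩
      · exact le_refl 0
    have hρkron : ρone d n ⊗ₖ (1 : Matrix (Fin d) (Fin d) ℂ)
        = Matrix.diagonal (fun p : Fin d × Fin d =>
            if p.1.val < n then ((((n:ℝ)⁻¹:ℝ)):ℂ) else 0) := by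
      rw [ρone, ← Matrix.diagonal_one, Matrix.diagonal_kronecker_diagonal]
      congr 1; funext p
      simp
    have hfun : (fun p : Fin d × Fin d => if p.1.val < n then ((((n:ℝ)⁻¹:ℝ)):ℂ) else 0)
        = fun p : Fin d × Fin d =>
          ((if p.1 = p.2 ∧ p.1.val < n then (((n:ℝ)⁻¹:ℝ):ℂ) else 0)
            + (if p.1.val < n ∧ p.1 ≠ p.2 then (((n:ℝ)⁻¹ * (n:ℝ)⁻¹ : ℝ):ℂ) else 0))
            + (if p.1.val < n ∧ p.1 ≠ p.2
              then ((((n:ℝ)⁻¹ - (n:ℝ)⁻¹*(n:ℝ)⁻¹ : ℝ)):ℂ) else 0) := by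
      funext p
      by_cases h1 : p.1.val < n <;> by_cases h2 : p.1 = p.2 <;>
        simp [h1, h2] <;> push_cast <;> ring
    have heq : ρone d n ⊗ₖ (1 : Matrix (Fin d) (Fin d) ℂ) - αone d n
        = (Matrix.diagonal (fun p : Fin d × Fin d =>
            if p.1 = p.2 ∧ p.1.val < n then (((n:ℝ)⁻¹:ℝ):ℂ) else 0)
          - ((n:ℝ)⁻¹ * (n:ℝ)⁻¹) • Matrix.vecMulVec
              (fun p : Fin d × Fin d => if p.1 = p.2 ∧ p.1.val < n then (1:ℂ) else 0)
              (star fun p : Fin d × Fin d => if p.1 = p.2 ∧ p.1.val < n then (1:ℂ) else 0))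
          + Matrix.diagonal (fun p : Fin d × Fin d =>
            if p.1.val < n ∧ p.1 ≠ p.2
              then ((((n:ℝ)⁻¹ - (n:ℝ)⁻¹*(n:ℝ)⁻¹ : ℝ)):ℂ) else 0) := by
      rw [hρkron, αone, hfun, ← Matrix.diagonal_add, ← Matrix.diagonal_add]
      have hwv : wv d n = fun p : Fin d × Fin d =>
          if p.1 = p.2 ∧ p.1.val < n then (1:ℂ) else 0 := rfl
      rw [hwv]
      abel
    rw [heq]
    exact hkey.add hdiagB
  · -- dephasing constraint
    ext ⟨i, k⟩ ⟨j, l⟩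
    simp only [dephM, Matrix.of_apply, Matrix.smul_apply, Matrix.kroneckerMap_apply]
    by_cases hpq : ((i, k) : Fin d × Fin d) = (j, l)
    · rw [Prod.mk.injEq] at hpq
      obtain ⟨rfl, rfl⟩ := hpq
      simp only [if_pos rfl]
      by_cases hik : i = k
      · subst hik
        by_cases hin : i.val < n <;>
          simp [αone, wv, ρone, Matrix.vecMulVec, Matrix.diagonal_apply, Matrix.add_apply,
            Matrix.smul_apply, Matrix.one_apply, hin, Complex.real_smul] <;>
          push_cast <;> ring
      · by_cases hin : i.val < n <;>
          simp [αone, wv, ρone, Matrix.vecMulVec, Matrix.diagonal_apply, Matrix.add_apply,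
            Matrix.smul_apply, Matrix.one_apply, hik, hin, Complex.real_smul] <;>
          push_cast <;> ring
    · rw [if_neg hpq]
      by_cases hij : i = j <;> by_cases hkl : k = l
      · exact absurd (by rw [hij, hkl]) hpq
      · simp [Matrix.one_apply, hkl]
      · simp [ρone, Matrix.diagonal_apply, hij]
      · simp [Matrix.one_apply, hkl]

lemma case1_value (hd : 1 ≤ d) (hn : 1 ≤ n) (hnd : n ≤ d) (lam : ℝ) :
    (((αone d n)ᵀ * (lam • phiPlus d + ((1 - lam) / (d : ℝ)) •
        (1 : Matrix (Fin d × Fin d) (Fin d × Fin d) ℂ))).trace).re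
      = lam + (1 - lam) / (n : ℝ) := by
  have hdR : (0:ℝ) < d := by exact_mod_cast hd
  have hnR : (0:ℝ) < n := by exact_mod_cast hn
  have hsum : (∑ i : Fin d, ∑ j : Fin d, αone d n (i,i) (j,j)) = 1 := by
    have h1 : ∀ i j : Fin d, αone d n (i,i) (j,j)
        = if i.val < n then (if j.val < n then (((n:ℝ)⁻¹ * (n:ℝ)⁻¹ : ℝ):ℂ) else 0) else 0 := by
      intro i j
      by_cases hin : i.val < n <;> by_cases hjn : j.val < n <;>
        simp [αone, wv, Matrix.vecMulVec, Matrix.diagonal_apply, Matrix.add_apply,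
          Matrix.smul_apply, hin, hjn, Prod.ext_iff, Complex.real_smul] <;>
        push_cast <;> ring
    rw [Finset.sum_congr rfl (fun i _ => Finset.sum_congr rfl (fun j _ => h1 i j))]
    have h2 : (∑ j : Fin d, if j.val < n then (((n:ℝ)⁻¹ * (n:ℝ)⁻¹ : ℝ):ℂ) else 0)
        = (n : ℂ) * (((n:ℝ)⁻¹ * (n:ℝ)⁻¹ : ℝ):ℂ) := by
      rw [← Finset.sum_filter, Finset.sum_const, card_filter_val_lt d n hnd, nsmul_eq_mul]
    have h3 : ∀ i : Fin d, (∑ j : Fin d, if i.val < n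
        then (if j.val < n then (((n:ℝ)⁻¹ * (n:ℝ)⁻¹ : ℝ):ℂ) else 0) else 0)
        = if i.val < n then (n : ℂ) * (((n:ℝ)⁻¹ * (n:ℝ)⁻¹ : ℝ):ℂ) else 0 := by
      intro i
      by_cases hin : i.val < n
      · simp only [hin, if_true]; exact h2
      · simp [hin]
    rw [Finset.sum_congr rfl (fun i _ => h3 i), ← Finset.sum_filter, Finset.sum_const,
      card_filter_val_lt d n hnd, nsmul_eq_mul]
    have hne : (n:ℂ) ≠ 0 := by exact_mod_cast hnR.ne'
    push_cast
    field_simp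
  have htrα : (αone d n).trace = (((d:ℝ)/(n:ℝ) : ℝ):ℂ) := by
    rw [Matrix.trace]
    have h1 : ∀ p : Fin d × Fin d, (αone d n).diag p
        = if p.1.val < n then (((n:ℝ)⁻¹ * (n:ℝ)⁻¹ : ℝ):ℂ) else 0 := by
      rintro ⟨i, k⟩
      by_cases h2 : i = k
      · subst h2
        by_cases h3 : i.val < n <;>
          simp [αone, wv, Matrix.vecMulVec, Matrix.diag_apply, Matrix.diagonal_apply,
            Matrix.add_apply, Matrix.smul_apply, h3, Complex.real_smul] <;>
          push_cast <;> ring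
      · by_cases h3 : i.val < n <;>
          simp [αone, wv, Matrix.vecMulVec, Matrix.diag_apply, Matrix.diagonal_apply,
            Matrix.add_apply, Matrix.smul_apply, h2, h3, Complex.real_smul] <;>
          push_cast <;> ring
    rw [Finset.sum_congr rfl (fun p _ => h1 p), Fintype.sum_prod_type]
    have h4 : ∀ i : Fin d, (∑ k : Fin d, if i.val < n
        then (((n:ℝ)⁻¹ * (n:ℝ)⁻¹ : ℝ):ℂ) else 0)
        = if i.val < n then (d:ℂ) * (((n:ℝ)⁻¹ * (n:ℝ)⁻¹ : ℝ):ℂ) else 0 := by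
      intro i
      by_cases hin : i.val < n <;> simp [hin, Finset.sum_const, Finset.card_univ, mul_comm]
    rw [Finset.sum_congr rfl (fun i _ => h4 i), ← Finset.sum_filter, Finset.sum_const,
      card_filter_val_lt d n hnd, nsmul_eq_mul]
    have hne : (n:ℂ) ≠ 0 := by exact_mod_cast hnR.ne'
    have hde : (d:ℂ) ≠ 0 := by exact_mod_cast hdR.ne'
    push_cast
    field_simp
  rw [trace_obj, hsum, htrα]
  have hcast : ((lam:ℂ) * 1 + (((1 - lam) / (d : ℝ) : ℝ) : ℂ) * (((d:ℝ)/(n:ℝ) : ℝ):ℂ))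
      = ((lam + (1-lam)/(n:ℝ) : ℝ) : ℂ) := by
    rw [mul_one, ← Complex.ofReal_mul]
    have : ((1 - lam) / (d : ℝ)) * ((d:ℝ)/(n:ℝ)) = (1-lam)/(n:ℝ) := by
      field_simp
    rw [this, ← Complex.ofReal_add]
  rw [hcast, Complex.ofReal_re]

end Case1

lemma mod_char (d a : ℕ) (hd : 0 < d) (ha : a < 2*d) :
    a % d = if a < d then a else a - d := by
  split
  · exact Nat.mod_eq_of_lt ‹_›
  · rw [Nat.mod_eq_sub_mod (by omega)]
    exact Nat.mod_eq_of_lt (by omega)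

lemma shift_eq (d : ℕ) (hd : 0 < d) (i k s : Fin d) :
    ((i.val + s.val) % d = k.val) ↔ s.val = (k.val + d - i.val) % d := by
  have hi := i.isLt; have hk := k.isLt; have hs := s.isLt
  rw [mod_char d (i.val + s.val) hd (by omega),
    mod_char d (k.val + d - i.val) hd (by omega)]
  split_ifs <;> omega

lemma sum_shift_indicator (d : ℕ) (hd : 0 < d) (i k : Fin d) (c : ℂ) :
    (∑ s : Fin d, if (i.val + s.val) % d = k.val then c else 0) = c := by
  have hlt : (k.val + d - i.val) % d < d := Nat.mod_lt _ hd
  rw [Finset.sum_eq_single (⟨(k.val + d - i.val) % d, hlt⟩ : Fin d)]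
  · rw [if_pos]
    exact (shift_eq d hd i k _).mpr rfl
  · intro s _ hs
    rw [if_neg]
    intro hc
    exact hs (Fin.val_injective ((shift_eq d hd i k s).mp hc))
  · intro h; exact absurd (Finset.mem_univ _) h

lemma card_filter_shift (d : ℕ) (hd : 0 < d) (s : Fin d) :
    ((Finset.univ.filter fun p : Fin d × Fin d =>
      (p.1.val + s.val) % d = p.2.val).card : ℝ) = d := by
  rw [Finset.card_filter, Fintype.sum_prod_type]
  have h1 : ∀ i : Fin d, (∑ k : Fin d, if (i.val + s.val) % d = k.val then 1 else 0) = 1 := by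
    intro i
    have hlt : (i.val + s.val) % d < d := Nat.mod_lt _ hd
    rw [Finset.sum_eq_single (⟨(i.val + s.val) % d, hlt⟩ : Fin d)]
    · simp
    · intro k _ hk
      rw [if_neg]
      intro hc
      exact hk (Fin.val_injective hc.symm)
    · intro h; exact absurd (Finset.mem_univ _) h
  rw [Finset.sum_congr rfl (fun i _ => h1 i), Finset.sum_const, Finset.card_univ,
    Fintype.card_fin, smul_eq_mul, mul_one]

lemma shift_zero_iff (d : ℕ) (hd : 0 < d) (i : Fin d) (s : Fin d) :
    ((i.val + s.val) % d = i.val) ↔ s.val = 0 := by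
  rw [shift_eq d hd i i s]
  have h : (i.val + d - i.val) % d = 0 := by
    have h2 : i.val + d - i.val = d := by omega
    rw [h2, Nat.mod_self]
  rw [h]

section Case2
variable (d n : ℕ)

def αtwo : Matrix (Fin d × Fin d) (Fin d × Fin d) ℂ :=
  ∑ s : Fin d, ((n:ℝ)⁻¹ * (d:ℝ)⁻¹) • Matrix.vecMulVec
    (fun p : Fin d × Fin d => if (p.1.val + s.val) % d = p.2.val then (1:ℂ) else 0)
    (star fun p : Fin d × Fin d => if (p.1.val + s.val) % d = p.2.val then (1:ℂ) else 0)

def ρtwo : Matrix (Fin d) (Fin d) ℂ :=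
  Matrix.diagonal (fun _ => ((((d:ℝ))⁻¹:ℝ):ℂ))

lemma αtwo_entry (p q : Fin d × Fin d) :
    αtwo d n p q = ∑ s : Fin d,
      if (p.1.val + s.val) % d = p.2.val ∧ (q.1.val + s.val) % d = q.2.val
        then ((((n:ℝ)⁻¹ * (d:ℝ)⁻¹ : ℝ)):ℂ) else 0 := by
  rw [αtwo, Matrix.sum_apply]
  congr 1; funext s
  by_cases h1 : (p.1.val + s.val) % d = p.2.val <;>
    by_cases h2 : (q.1.val + s.val) % d = q.2.val <;>
    simp [Matrix.smul_apply, Matrix.vecMulVec, h1, h2, Complex.real_smul] <;> push_cast <;> ring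

lemma case2_feasible (hd : 1 ≤ d) (hn : 1 ≤ n) (hdn : d ≤ n) :
    (ρtwo d).PosSemidef ∧ (ρtwo d).trace = 1 ∧ (αtwo d n).PosSemidef ∧
      ((ρtwo d) ⊗ₖ (1 : Matrix (Fin d) (Fin d) ℂ) - αtwo d n).PosSemidef ∧
      dephM (αtwo d n) = ((1 : ℝ) / (n : ℝ)) •
        (dephM (ρtwo d) ⊗ₖ (1 : Matrix (Fin d) (Fin d) ℂ)) := by
  have hdR : (0:ℝ) < d := by exact_mod_cast hd
  have hnR : (0:ℝ) < n := by exact_mod_cast hn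
  have hd0 : 0 < d := hd
  have hr : (0:ℝ) ≤ (n:ℝ)⁻¹ * (d:ℝ)⁻¹ := by positivity
  refine ⟨?_, ?_, ?_, ?_, ?_⟩
  · exact Matrix.PosSemidef.diagonal (fun i => by
      rw [Complex.le_def]
      refine ⟨by simpa using inv_nonneg.mpr hdR.le, by simp⟩)
  · rw [ρtwo, Matrix.trace_diagonal]
    rw [Finset.sum_const, Finset.card_univ, Fintype.card_fin, nsmul_eq_mul]
    have hde : (d:ℂ) ≠ 0 := by exact_mod_cast hdR.ne'
    push_cast
    field_simp
  · rw [αtwo]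
    refine Finset.sum_induction _ _ (fun a b ha hb => ha.add hb) Matrix.PosSemidef.zero
      (fun s _ => smul_outer_psd _ hr _)
  · have hρkron : ρtwo d ⊗ₖ (1 : Matrix (Fin d) (Fin d) ℂ)
        = Matrix.diagonal (fun _ : Fin d × Fin d => ((((d:ℝ))⁻¹:ℝ):ℂ)) := by
      rw [ρtwo, ← Matrix.diagonal_one, Matrix.diagonal_kronecker_diagonal]
      have hfn : (fun mn : Fin d × Fin d => ((((d:ℝ))⁻¹:ℝ):ℂ) * 1)
          = fun _ : Fin d × Fin d => ((((d:ℝ))⁻¹:ℝ):ℂ) := by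
        funext mn; exact mul_one _
      rw [hfn]
    have hsumdiag : (∑ s : Fin d, Matrix.diagonal (fun p : Fin d × Fin d =>
        if (p.1.val + s.val) % d = p.2.val then ((((d:ℝ))⁻¹:ℝ):ℂ) else 0))
        = Matrix.diagonal (fun _ : Fin d × Fin d => ((((d:ℝ))⁻¹:ℝ):ℂ)) := by
      ext p q
      rw [Matrix.sum_apply]
      by_cases hpq : p = q
      · subst hpq
        simp only [Matrix.diagonal_apply_eq]
        exact sum_shift_indicator d hd0 p.1 p.2 _
      · simp [Matrix.diagonal_apply_ne _ hpq]
    have heq : ρtwo d ⊗ₖ (1 : Matrix (Fin d) (Fin d) ℂ) - αtwo d n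
        = ∑ s : Fin d, (Matrix.diagonal (fun p : Fin d × Fin d =>
            if (p.1.val + s.val) % d = p.2.val then ((((d:ℝ))⁻¹:ℝ):ℂ) else 0)
          - ((n:ℝ)⁻¹ * (d:ℝ)⁻¹) • Matrix.vecMulVec
            (fun p : Fin d × Fin d => if (p.1.val + s.val) % d = p.2.val then (1:ℂ) else 0)
            (star fun p : Fin d × Fin d =>
              if (p.1.val + s.val) % d = p.2.val then (1:ℂ) else 0)) := by
      rw [Finset.sum_sub_distrib, hsumdiag, hρkron, αtwo]
    rw [heq]
    refine Finset.sum_induction _ _ (fun a b ha hb => ha.add hb) Matrix.PosSemidef.zero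
      (fun s _ => ?_)
    refine diag_sub_outer_psd _ _ _ hr ?_
    rw [card_filter_shift d hd0 s]
    have h1 : (n:ℝ)⁻¹ * (d:ℝ)⁻¹ * (d:ℝ) = (n:ℝ)⁻¹ := by
      field_simp
    rw [h1]
    exact inv_anti₀ hdR (by exact_mod_cast hdn)
  · ext ⟨i, k⟩ ⟨j, l⟩
    simp only [dephM, Matrix.of_apply, Matrix.smul_apply, Matrix.kroneckerMap_apply]
    by_cases hpq : ((i, k) : Fin d × Fin d) = (j, l)
    · rw [Prod.mk.injEq] at hpq
      obtain ⟨rfl, rfl⟩ := hpq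
      simp only [if_pos rfl]
      rw [αtwo_entry]
      have h1 : ∀ s : Fin d, (if (i.val + s.val) % d = k.val ∧ (i.val + s.val) % d = k.val
          then ((((n:ℝ)⁻¹ * (d:ℝ)⁻¹ : ℝ)):ℂ) else 0)
          = if (i.val + s.val) % d = k.val then ((((n:ℝ)⁻¹ * (d:ℝ)⁻¹ : ℝ)):ℂ) else 0 := by
        intro s; simp [and_self]
      rw [Finset.sum_congr rfl (fun s _ => h1 s), sum_shift_indicator d hd0 i k]
      simp [ρtwo, Matrix.one_apply, Complex.real_smul]
    · rw [if_neg hpq]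
      by_cases hij : i = j <;> by_cases hkl : k = l
      · exact absurd (by rw [hij, hkl]) hpq
      · simp [Matrix.one_apply, hkl]
      · simp [hij]
      · simp [Matrix.one_apply, hkl]

lemma case2_value (hd : 1 ≤ d) (hn : 1 ≤ n) (hdn : d ≤ n) (lam : ℝ) :
    (((αtwo d n)ᵀ * (lam • phiPlus d + ((1 - lam) / (d : ℝ)) •
        (1 : Matrix (Fin d × Fin d) (Fin d × Fin d) ℂ))).trace).re
      = ((1 - lam) + lam * (d : ℝ)) / (n : ℝ) := by
  have hdR : (0:ℝ) < d := by exact_mod_cast hd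
  have hnR : (0:ℝ) < n := by exact_mod_cast hn
  have hd0 : 0 < d := hd
  have hdiagval : ∀ i j : Fin d, αtwo d n (i,i) (j,j) = ((((n:ℝ)⁻¹ * (d:ℝ)⁻¹ : ℝ)):ℂ) := by
    intro i j
    rw [αtwo_entry]
    rw [Finset.sum_eq_single (⟨0, hd0⟩ : Fin d)]
    · rw [if_pos]
      constructor
      · exact (shift_zero_iff d hd0 i ⟨0, hd0⟩).mpr rfl
      · exact (shift_zero_iff d hd0 j ⟨0, hd0⟩).mpr rfl
    · intro s _ hs
      rw [if_neg]
      intro hc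
      exact hs (Fin.val_injective ((shift_zero_iff d hd0 i s).mp hc.1))
    · intro h; exact absurd (Finset.mem_univ _) h
  have hsum : (∑ i : Fin d, ∑ j : Fin d, αtwo d n (i,i) (j,j))
      = (((d:ℝ) * (d:ℝ) * ((n:ℝ)⁻¹ * (d:ℝ)⁻¹) : ℝ):ℂ) := by
    rw [Finset.sum_congr rfl (fun i _ => Finset.sum_congr rfl (fun j _ => hdiagval i j))]
    simp [Finset.sum_const, Finset.card_univ, Fintype.card_fin]
    push_cast
    ring
  have htrα : (αtwo d n).trace = (((d:ℝ) * (d:ℝ) * ((n:ℝ)⁻¹ * (d:ℝ)⁻¹) : ℝ):ℂ) := by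
    rw [Matrix.trace]
    have h1 : ∀ p : Fin d × Fin d, (αtwo d n).diag p
        = ((((n:ℝ)⁻¹ * (d:ℝ)⁻¹ : ℝ)):ℂ) := by
      intro p
      show αtwo d n p p = _
      rw [αtwo_entry]
      have h2 : ∀ s : Fin d, (if (p.1.val + s.val) % d = p.2.val ∧ (p.1.val + s.val) % d = p.2.val
          then ((((n:ℝ)⁻¹ * (d:ℝ)⁻¹ : ℝ)):ℂ) else 0)
          = if (p.1.val + s.val) % d = p.2.val then ((((n:ℝ)⁻¹ * (d:ℝ)⁻¹ : ℝ)):ℂ) else 0 := by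
        intro s; simp [and_self]
      rw [Finset.sum_congr rfl (fun s _ => h2 s), sum_shift_indicator d hd0 p.1 p.2]
    rw [Finset.sum_congr rfl (fun p _ => h1 p), Finset.sum_const, Finset.card_univ]
    simp only [nsmul_eq_mul, Fintype.card_prod, Fintype.card_fin]
    push_cast
    ring
  rw [trace_obj, hsum, htrα]
  have hcast : ((lam:ℂ) * (((d:ℝ) * (d:ℝ) * ((n:ℝ)⁻¹ * (d:ℝ)⁻¹) : ℝ):ℂ)
      + (((1 - lam) / (d : ℝ) : ℝ) : ℂ) * (((d:ℝ) * (d:ℝ) * ((n:ℝ)⁻¹ * (d:ℝ)⁻¹) : ℝ):ℂ))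
      = ((((1:ℝ) - lam + lam * (d:ℝ)) / (n:ℝ) : ℝ) : ℂ) := by
    rw [← Complex.ofReal_mul, ← Complex.ofReal_mul, ← Complex.ofReal_add]
    congr 1
    field_simp
    ring
  rw [hcast, Complex.ofReal_re]

end Case2

end

/-- One-shot coherence distillation fidelity under MISC for the partially
depolarizing channel. -/
theorem distill_depolarizing
    (d n : ℕ) (hd : 1 ≤ d) (hn : 1 ≤ n)
    (lam : ℝ) (h0 : 0 ≤ lam) (h1 : lam ≤ 1) :
    (n ≤ d →
      IsGreatest
        {r : ℝ | ∃ α : Matrix (Fin d × Fin d) (Fin d × Fin d) ℂ,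
          (∃ ρ : Matrix (Fin d) (Fin d) ℂ,
            ρ.PosSemidef ∧ ρ.trace = 1 ∧ α.PosSemidef ∧
            (ρ ⊗ₖ (1 : Matrix (Fin d) (Fin d) ℂ) - α).PosSemidef ∧
            dephM α = ((1 : ℝ) / (n : ℝ)) •
              (dephM ρ ⊗ₖ (1 : Matrix (Fin d) (Fin d) ℂ))) ∧
          r = ((αᵀ * (lam • phiPlus d +
              ((1 - lam) / (d : ℝ)) • (1 : Matrix (Fin d × Fin d) (Fin d × Fin d) ℂ))).trace).re}
        (lam + (1 - lam) / (n : ℝ))) ∧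
    (d ≤ n →
      IsGreatest
        {r : ℝ | ∃ α : Matrix (Fin d × Fin d) (Fin d × Fin d) ℂ,
          (∃ ρ : Matrix (Fin d) (Fin d) ℂ,
            ρ.PosSemidef ∧ ρ.trace = 1 ∧ α.PosSemidef ∧
            (ρ ⊗ₖ (1 : Matrix (Fin d) (Fin d) ℂ) - α).PosSemidef ∧
            dephM α = ((1 : ℝ) / (n : ℝ)) •
              (dephM ρ ⊗ₖ (1 : Matrix (Fin d) (Fin d) ℂ))) ∧
          r = ((αᵀ * (lam • phiPlus d +
              ((1 - lam) / (d : ℝ)) • (1 : Matrix (Fin d × Fin d) (Fin d × Fin d) ℂ))).trace).re}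
        (((1 - lam) + lam * (d : ℝ)) / (n : ℝ))) := by
  constructor
  · intro hnd
    constructor
    · obtain ⟨hA, hB, hC, hD, hE⟩ := case1_feasible d n hd hn hnd
      exact ⟨αone d n, ⟨ρone d n, hA, hB, hC, hD, hE⟩, (case1_value d n hd hn hnd lam).symm⟩
    · rintro r ⟨α, ⟨ρ, hρ, htr, hα, hdiff, hdeph⟩, rfl⟩
      exact (upper_bounds_main d n hd hn lam h0 h1 α ρ hρ htr hα hdiff hdeph).1
  · intro hdn
    constructor
    · obtain ⟨hA, hB, hC, hD, hE⟩ := case2_feasible d n hd hn hdn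
      exact ⟨αtwo d n, ⟨ρtwo d, hA, hB, hC, hD, hE⟩, (case2_value d n hd hn hdn lam).symm⟩
    · rintro r ⟨α, ⟨ρ, hρ, htr, hα, hdiff, hdeph⟩, rfl⟩
      exact (upper_bounds_main d n hd hn lam h0 h1 α ρ hρ htr hα hdiff hdeph).2

end
end

section
/- Let d ≥ 1 and n ≥ 1 be natural numbers and λ ∈ ℝ with 0 ≤ λ ≤ 1. Let J_deph ∈ Matrix (Fin d × Fin d) (Fin d × Fin d) ℂ be the Choi matrix of the partially dephasing channel: J_deph = λ • Φ⁺ + (1−λ) • 𝒟_{full}(Φ⁺), where Φ⁺ (i,p) (j,q) = if i = p ∧ j = q then 1 else 0, so 𝒟_{full}(Φ⁺) = Σ_i |ii⟩⟨ii|. Consider the feasible set S of matrices α ∈ Matrix (Fin d × Fin d) (Fin d × Fin d) ℂ for which there exists ρ ∈ Matrix (Fin d) (Fin d) ℂ with: ρ.PosSemidef, trace ρ = 1, α.PosSemidef, (ρ ⊗ₖ 1 − α).PosSemidef, and 𝒟_{full}(α) = (1/n) • (𝒟(ρ) ⊗ₖ 1). Then the value sup_{α ∈ S} (trace (αᵀ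 * J_deph)).re is attained and equals (1 + (n−1)·λ)/n when n ≤ d, and equals (λ·d + (1−λ))/n when d ≤ n; i.e., this real number is the greatest element of { (trace (αᵀ * J_deph)).re : α ∈ S }. -/
open Matrix Kronecker ComplexOrder

noncomputable section

namespace DistillAux

lemma tr_phi (d : ℕ) (α : Matrix (Fin d × Fin d) (Fin d × Fin d) ℂ) :
    (αᵀ * phiPlus d).trace = ∑ i : Fin d, ∑ j : Fin d, α (i,i) (j,j) := by
  simp only [Matrix.trace, Matrix.diag, Matrix.mul_apply, Matrix.transpose_apply,
    phiPlus, Matrix.of_apply]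
  simp only [Fintype.sum_prod_type, mul_ite, mul_one, mul_zero, ite_and,
    Prod.mk.injEq, Finset.sum_ite_irrel, Finset.sum_const_zero,
    Finset.sum_ite_eq, Finset.sum_ite_eq', Finset.mem_univ, if_true]
  rw [Finset.sum_comm]

lemma tr_deph (d : ℕ) (α : Matrix (Fin d × Fin d) (Fin d × Fin d) ℂ) :
    (αᵀ * dephM (phiPlus d)).trace = ∑ i : Fin d, α (i,i) (i,i) := by
  simp only [Matrix.trace, Matrix.diag, Matrix.mul_apply, Matrix.transpose_apply,
    dephM, phiPlus, Matrix.of_apply]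
  simp only [Fintype.sum_prod_type, mul_ite, mul_one, mul_zero, ite_and,
    Prod.mk.injEq, Finset.sum_ite_irrel, Finset.sum_const_zero,
    Finset.sum_ite_eq, Finset.sum_ite_eq', Finset.mem_univ, if_true]

/-- objective decomposition -/
lemma tr_obj (d : ℕ) (lam : ℝ) (α : Matrix (Fin d × Fin d) (Fin d × Fin d) ℂ) :
    ((αᵀ * (lam • phiPlus d + (1 - lam) • dephM (phiPlus d))).trace)
      = lam • (∑ i : Fin d, ∑ j : Fin d, α (i,i) (j,j))
        + (1 - lam) • (∑ i : Fin d, α (i,i) (i,i)) := by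
  rw [Matrix.mul_add, Matrix.mul_smul, Matrix.mul_smul, Matrix.trace_add,
    Matrix.trace_smul, Matrix.trace_smul, tr_phi, tr_deph]

/-- the diagonal-pair indicator vector -/
def dvec (d : ℕ) : Fin d × Fin d → ℂ := fun p => if p.1 = p.2 then (1:ℂ) else 0

lemma quad_dvec (d : ℕ) (A : Matrix (Fin d × Fin d) (Fin d × Fin d) ℂ) :
    dotProduct (star (dvec d)) (A *ᵥ dvec d)
      = ∑ i : Fin d, ∑ j : Fin d, A (i,i) (j,j) := by
  simp only [dvec, dotProduct, Matrix.mulVec, Pi.star_apply, apply_ite (star : ℂ → ℂ),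
    star_one, star_zero, dotProduct]
  simp only [Fintype.sum_prod_type, mul_ite, ite_mul, mul_one, mul_zero, one_mul, zero_mul,
    Finset.sum_ite_irrel, Finset.sum_const_zero,
    Finset.sum_ite_eq, Finset.sum_ite_eq', Finset.mem_univ, if_true]

/-- the pair-difference vector -/
def pvec (d : ℕ) (i j : Fin d) : Fin d × Fin d → ℂ :=
  fun p => (if p = (i,i) then (1:ℂ) else 0) - (if p = (j,j) then (1:ℂ) else 0)

lemma quad_pvec (d : ℕ) (A : Matrix (Fin d × Fin d) (Fin d × Fin d) ℂ) (i j : Fin d) :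
    dotProduct (star (pvec d i j)) (A *ᵥ pvec d i j)
      = A (i,i) (i,i) + A (j,j) (j,j) - A (i,i) (j,j) - A (j,j) (i,i) := by
  simp only [pvec, dotProduct, Matrix.mulVec, Pi.star_apply, star_sub,
    apply_ite (star : ℂ → ℂ), star_one, star_zero, dotProduct]
  simp only [sub_mul, mul_sub, ite_mul, mul_ite, mul_one, mul_zero, one_mul, zero_mul,
    Finset.sum_sub_distrib, Finset.sum_ite_irrel, Finset.sum_const_zero,
    Finset.sum_ite_eq, Finset.sum_ite_eq', Finset.mem_univ, if_true]
  ring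

/-- outer product matrix `w w*` -/
def outerM {ι : Type*} [Fintype ι] (w : ι → ℂ) : Matrix ι ι ℂ :=
  Matrix.of fun p q => w p * (starRingEnd ℂ) (w q)

lemma outerM_posSemidef {ι : Type*} [Fintype ι] (w : ι → ℂ) : (outerM w).PosSemidef := by
  refine .of_dotProduct_mulVec_nonneg ?_ ?_
  · ext p q
    simp only [outerM, Matrix.conjTranspose_apply, Matrix.of_apply, star_mul']
    simp only [Complex.star_def, Complex.conj_conj]
    ring
  · intro x
    have h : dotProduct (star x) (outerM w *ᵥ x)
        = star (∑ q, (starRingEnd ℂ) (w q) * x q) * (∑ q, (starRingEnd ℂ) (w q) * x q) := by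
      simp only [outerM, dotProduct, Matrix.mulVec, Pi.star_apply, dotProduct,
        Matrix.of_apply, star_sum, star_mul', Complex.star_def, Complex.conj_conj,
        Finset.sum_mul, Finset.mul_sum]
      rw [Finset.sum_comm]
      refine Finset.sum_congr rfl fun p _ => Finset.sum_congr rfl fun q _ => by ring
    rw [h]
    exact star_mul_self_nonneg _

lemma smul_posSemidef {ι : Type*} [Fintype ι] {A : Matrix ι ι ℂ} (hA : A.PosSemidef)
    {c : ℝ} (hc : 0 ≤ c) : ((c : ℂ) • A).PosSemidef := by
  refine .of_dotProduct_mulVec_nonneg ?_ ?_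
  · unfold Matrix.IsHermitian
    rw [Matrix.conjTranspose_smul, hA.1.eq]
    congr 1
    simp [Complex.star_def, Complex.conj_ofReal]
  · intro x
    rw [Matrix.smul_mulVec, dotProduct_smul, smul_eq_mul]
    exact mul_nonneg (Complex.zero_le_real.2 hc) (hA.dotProduct_mulVec_nonneg x)


lemma quad_outer {ι : Type*} [Fintype ι] (w x : ι → ℂ) :
    dotProduct (star x) (outerM w *ᵥ x)
      = star (∑ q, (starRingEnd ℂ) (w q) * x q) * (∑ q, (starRingEnd ℂ) (w q) * x q) := by
  simp only [outerM, dotProduct, Matrix.mulVec, Pi.star_apply, dotProduct,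
    Matrix.of_apply, star_sum, star_mul', Complex.star_def, Complex.conj_conj,
    Finset.sum_mul, Finset.mul_sum]
  rw [Finset.sum_comm]
  refine Finset.sum_congr rfl fun p _ => Finset.sum_congr rfl fun q _ => by ring

lemma card_fin_lt (d s : ℕ) (hsd : s ≤ d) :
    (Finset.univ.filter fun i : Fin d => (i:ℕ) < s).card = s := by
  have he : (Finset.univ.filter fun i : Fin d => (i:ℕ) < s)
      = Finset.map (Fin.castLEEmb hsd) Finset.univ := by
    ext i
    simp only [Finset.mem_filter, Finset.mem_univ, true_and, Finset.mem_map,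
      Fin.castLEEmb, Function.Embedding.coeFn_mk]
    constructor
    · intro h; exact ⟨⟨(i:ℕ), h⟩, Fin.ext rfl⟩
    · rintro ⟨j, rfl⟩; exact j.isLt
  rw [he, Finset.card_map, Finset.card_univ, Fintype.card_fin]

lemma card_pair_lt (d s : ℕ) (hsd : s ≤ d) :
    (Finset.univ.filter fun p : Fin d × Fin d => p.1 = p.2 ∧ (p.1:ℕ) < s).card = s := by
  have he : (Finset.univ.filter fun p : Fin d × Fin d => p.1 = p.2 ∧ (p.1:ℕ) < s)
      = Finset.map ⟨fun j : Fin s => (Fin.castLE hsd j, Fin.castLE hsd j),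
          fun a b h => Fin.castLE_injective hsd (congrArg Prod.fst h)⟩ Finset.univ := by
    ext ⟨a, b⟩
    simp only [Finset.mem_filter, Finset.mem_univ, true_and, Finset.mem_map,
      Function.Embedding.coeFn_mk]
    constructor
    · rintro ⟨h1, h2⟩
      subst h1
      exact ⟨⟨(a:ℕ), h2⟩, Prod.ext (Fin.ext rfl) (Fin.ext rfl)⟩
    · rintro ⟨j, hj⟩
      obtain ⟨rfl, rfl⟩ := Prod.mk.injEq .. ▸ hj
      exact ⟨rfl, j.isLt⟩
  rw [he, Finset.card_map, Finset.card_univ, Fintype.card_fin]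

lemma sum_indicator (d s : ℕ) (hsd : s ≤ d) (x : ℂ) :
    (∑ i : Fin d, if (i:ℕ) < s then x else 0) = (s:ℂ) * x := by
  rw [Finset.sum_ite, Finset.sum_const_zero, add_zero, Finset.sum_const,
    card_fin_lt d s hsd, nsmul_eq_mul]

/-- The key nontrivial PSD fact: `n·diag(1_P) - 1_P 1_P* ⪰ 0` when `|P| ≤ n`. -/
lemma nDiag_sub_outer_posSemidef {ι : Type*} [Fintype ι] [DecidableEq ι]
    (P : ι → Prop) [DecidablePred P] (n : ℕ)
    (hcard : (Finset.univ.filter fun p => P p).card ≤ n) :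
    ((n : ℂ) • Matrix.diagonal (fun p => if P p then (1:ℂ) else 0)
      - outerM (fun p => if P p then (1:ℂ) else 0)).PosSemidef := by
  set w : ι → ℂ := fun p => if P p then (1:ℂ) else 0 with hw
  have hsw : star w = w := funext fun p => by
    simp [hw, Pi.star_apply, apply_ite (star : ℂ → ℂ)]
  refine .of_dotProduct_mulVec_nonneg ?_ ?_
  · unfold Matrix.IsHermitian
    rw [Matrix.conjTranspose_sub, Matrix.conjTranspose_smul, Matrix.diagonal_conjTranspose,
      (outerM_posSemidef w).1.eq, hsw, star_natCast]
  · intro x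
    rw [Matrix.sub_mulVec, dotProduct_sub, sub_nonneg, quad_outer]
    have hz : (∑ q, (starRingEnd ℂ) (w q) * x q)
        = ∑ q ∈ Finset.univ.filter fun p => P p, x q := by
      rw [Finset.sum_filter]
      refine Finset.sum_congr rfl fun q _ => by
        simp [hw, apply_ite (starRingEnd ℂ)]
    set z : ℂ := ∑ q, (starRingEnd ℂ) (w q) * x q with hzdef
    have h1 : star z * z = (Complex.normSq z : ℂ) := by
      rw [mul_comm]; exact (Complex.mul_conj z)
    have h2 : dotProduct (star x) (((n : ℂ) • Matrix.diagonal w) *ᵥ x)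
        = ((n : ℝ) * ∑ p ∈ Finset.univ.filter fun p => P p, Complex.normSq (x p) : ℝ) := by
      rw [Matrix.smul_mulVec, dotProduct_smul, smul_eq_mul]
      have : dotProduct (star x) (Matrix.diagonal w *ᵥ x)
          = ∑ p ∈ Finset.univ.filter fun p => P p, (Complex.normSq (x p) : ℂ) := by
        rw [Finset.sum_filter]
        simp only [dotProduct, Matrix.mulVec_diagonal, Pi.star_apply]
        refine Finset.sum_congr rfl fun p _ => ?_
        by_cases h : P p
        · simp only [hw, h, if_true, mul_one, one_mul]
          rw [mul_comm]
          exact Complex.mul_conj _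
        · simp [hw, h]
      rw [this]
      push_cast
      rw [Finset.mul_sum]
    rw [h1, h2, hz]
    rw [Complex.real_le_real]
    set F := Finset.univ.filter fun p => P p with hF
    calc Complex.normSq (∑ q ∈ F, x q) = ‖∑ q ∈ F, x q‖ ^ 2 := by
          rw [Complex.sq_norm]
      _ ≤ (∑ q ∈ F, ‖x q‖) ^ 2 := by
          apply pow_le_pow_left₀ (norm_nonneg _) (norm_sum_le _ _)
      _ ≤ (F.card : ℝ) * ∑ q ∈ F, ‖x q‖ ^ 2 := sq_sum_le_card_mul_sum_sq
      _ ≤ (n : ℝ) * ∑ q ∈ F, ‖x q‖ ^ 2 := by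
          apply mul_le_mul_of_nonneg_right (by exact_mod_cast hcard)
          exact Finset.sum_nonneg fun q _ => sq_nonneg _
      _ = (n : ℝ) * ∑ q ∈ F, Complex.normSq (x q) := by
          congr 1
          exact Finset.sum_congr rfl fun q _ => by rw [Complex.sq_norm]


lemma mem_value (d n s : ℕ) (hn : 1 ≤ n) (hs1 : 1 ≤ s) (hsd : s ≤ d) (hsn : s ≤ n) (lam : ℝ) :
    ∃ α : Matrix (Fin d × Fin d) (Fin d × Fin d) ℂ,
      (∃ ρ : Matrix (Fin d) (Fin d) ℂ,
        ρ.PosSemidef ∧ ρ.trace = 1 ∧ α.PosSemidef ∧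
        (ρ ⊗ₖ (1 : Matrix (Fin d) (Fin d) ℂ) - α).PosSemidef ∧
        dephM α = ((1 : ℝ) / (n : ℝ)) • (dephM ρ ⊗ₖ (1 : Matrix (Fin d) (Fin d) ℂ))) ∧
      (lam * (s:ℝ) + (1 - lam)) / (n:ℝ)
        = ((αᵀ * (lam • phiPlus d + (1 - lam) • dephM (phiPlus d))).trace).re := by
  have hs0 : ((s:ℝ)) ≠ 0 := Nat.cast_ne_zero.2 (Nat.one_le_iff_ne_zero.1 hs1)
  have hn0 : ((n:ℝ)) ≠ 0 := Nat.cast_ne_zero.2 (Nat.one_le_iff_ne_zero.1 hn)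
  set c : ℝ := 1/((s:ℝ)*(n:ℝ)) with hc
  set cs : ℝ := 1/(s:ℝ) with hcs
  have hc0 : 0 ≤ c := by positivity
  have hcs0 : 0 ≤ cs := by positivity
  have hcc : c ≤ cs := by
    rw [hc, hcs]
    apply one_div_le_one_div_of_le
    · positivity
    · exact le_mul_of_one_le_right (by positivity) (by exact_mod_cast hn)
  have hcn : ((c:ℝ):ℂ) * (n:ℂ) = ((cs:ℝ):ℂ) := by
    rw [hc, hcs]; push_cast; field_simp
  set w : Fin d × Fin d → ℂ := fun p => if p.1 = p.2 ∧ (p.1:ℕ) < s then (1:ℂ) else 0 with hwdef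
  set ρ : Matrix (Fin d) (Fin d) ℂ :=
    Matrix.diagonal (fun i : Fin d => if (i:ℕ) < s then ((cs:ℝ):ℂ) else 0) with hρdef
  set α : Matrix (Fin d × Fin d) (Fin d × Fin d) ℂ :=
    (c:ℂ) • outerM w + Matrix.diagonal
      (fun p : Fin d × Fin d => if (p.1:ℕ) < s ∧ p.1 ≠ p.2 then (c:ℂ) else 0) with hαdef
  have hρkron : ρ ⊗ₖ (1 : Matrix (Fin d) (Fin d) ℂ)
      = Matrix.diagonal (fun p : Fin d × Fin d =>
          if (p.1:ℕ) < s then ((cs:ℝ):ℂ) else 0) := by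
    ext ⟨i, p⟩ ⟨j, q⟩
    simp only [hρdef, Matrix.kroneckerMap_apply, Matrix.diagonal_apply,
      Matrix.one_apply, Prod.mk.injEq, mul_ite, ite_mul, mul_one, mul_zero,
      one_mul, zero_mul]
    split_ifs <;> simp_all
  have hαdiag : ∀ p : Fin d × Fin d, α p p = if (p.1:ℕ) < s then ((c:ℝ):ℂ) else 0 := by
    rintro ⟨a, b⟩
    simp only [hαdef, hwdef, outerM, Matrix.add_apply, Matrix.smul_apply,
      Matrix.diagonal_apply_eq, Matrix.of_apply, smul_eq_mul,
      apply_ite (starRingEnd ℂ), _root_.map_one, map_zero]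
    by_cases h2 : a = b
    · subst h2
      by_cases h1 : (a:ℕ) < s <;> simp [h1]
    · by_cases h1 : (a:ℕ) < s <;> simp [h1, h2]
  refine ⟨α, ⟨ρ, ?_, ?_, ?_, ?_, ?_⟩, ?_⟩
  · exact Matrix.PosSemidef.diagonal fun i => by
      dsimp only
      split_ifs
      · exact Complex.zero_le_real.2 hcs0
      · exact le_refl 0
  · rw [hρdef, Matrix.trace_diagonal, sum_indicator d s hsd]
    rw [hcs]
    push_cast
    field_simp
  · exact (smul_posSemidef (outerM_posSemidef w) hc0).add
      (Matrix.PosSemidef.diagonal fun p => by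
        dsimp only
        split_ifs
        · exact Complex.zero_le_real.2 hc0
        · exact le_refl 0)
  · have hkey := nDiag_sub_outer_posSemidef
      (fun p : Fin d × Fin d => p.1 = p.2 ∧ (p.1:ℕ) < s) n
      (by rw [card_pair_lt d s hsd]; exact hsn)
    have hdiag : (fun p : Fin d × Fin d => if (p.1:ℕ) < s then ((cs:ℝ):ℂ) else 0)
        = (fun p : Fin d × Fin d =>
            ((c:ℂ) * (n:ℂ)) • (if p.1 = p.2 ∧ (p.1:ℕ) < s then (1:ℂ) else 0)
            + ((if (p.1:ℕ) < s ∧ p.1 ≠ p.2 then (c:ℂ) else 0)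
              + (if (p.1:ℕ) < s ∧ p.1 ≠ p.2 then ((cs - c : ℝ):ℂ) else 0))) := by
      funext p
      obtain ⟨a, b⟩ := p
      simp only [smul_eq_mul]
      by_cases h2 : a = b
      · subst h2
        by_cases h1 : (a:ℕ) < s <;> simp [h1, hcn]
      · by_cases h1 : (a:ℕ) < s <;> simp [h1, h2] <;> push_cast <;> ring
    have hdecomp : ρ ⊗ₖ (1 : Matrix (Fin d) (Fin d) ℂ) - α
        = (c:ℂ) • ((n : ℂ) • Matrix.diagonal
              (fun p : Fin d × Fin d => if p.1 = p.2 ∧ (p.1:ℕ) < s then (1:ℂ) else 0)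
            - outerM w)
          + Matrix.diagonal (fun p : Fin d × Fin d =>
              if (p.1:ℕ) < s ∧ p.1 ≠ p.2 then ((cs - c : ℝ):ℂ) else 0) := by
      rw [hρkron, hαdef, hdiag]
      rw [show (Matrix.diagonal (fun p : Fin d × Fin d =>
            ((c:ℂ) * (n:ℂ)) • (if p.1 = p.2 ∧ (p.1:ℕ) < s then (1:ℂ) else 0)
            + ((if (p.1:ℕ) < s ∧ p.1 ≠ p.2 then (c:ℂ) else 0)
              + (if (p.1:ℕ) < s ∧ p.1 ≠ p.2 then ((cs - c : ℝ):ℂ) else 0))))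
          = ((c:ℂ) * (n:ℂ)) • Matrix.diagonal
              (fun p : Fin d × Fin d => if p.1 = p.2 ∧ (p.1:ℕ) < s then (1:ℂ) else 0)
            + (Matrix.diagonal (fun p : Fin d × Fin d =>
                if (p.1:ℕ) < s ∧ p.1 ≠ p.2 then (c:ℂ) else 0)
              + Matrix.diagonal (fun p : Fin d × Fin d =>
                if (p.1:ℕ) < s ∧ p.1 ≠ p.2 then ((cs - c : ℝ):ℂ) else 0)) from by
        rw [← Matrix.diagonal_smul, ← Matrix.diagonal_add, ← Matrix.diagonal_add]
        rfl]
      module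
    rw [hdecomp]
    exact (smul_posSemidef hkey hc0).add
      (Matrix.PosSemidef.diagonal fun p => by
        dsimp only
        split_ifs
        · exact Complex.zero_le_real.2 (sub_nonneg.2 hcc)
        · exact le_refl 0)
  · have h1 : dephM α = Matrix.diagonal
        (fun p : Fin d × Fin d => if (p.1:ℕ) < s then ((c:ℝ):ℂ) else 0) := by
      ext p q
      by_cases hpq : p = q
      · subst hpq
        simp [dephM, hαdiag p]
      · simp [dephM, hpq, Matrix.diagonal_apply]
    have h2 : dephM ρ = ρ := by
      ext i j
      simp only [dephM, Matrix.of_apply, hρdef, Matrix.diagonal_apply]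
      split_ifs <;> simp_all
    rw [h1, h2, hρkron]
    ext p q
    simp only [Matrix.smul_apply, Matrix.diagonal_apply]
    by_cases hpq : p = q
    · subst hpq
      simp only [if_pos rfl]
      by_cases hp : (p.1:ℕ) < s
      · simp only [hp, if_true, Complex.real_smul]
        rw [← hcn]
        push_cast
        field_simp
      · simp [hp]
    · simp [hpq]
  · have hij : ∀ i j : Fin d, α (i,i) (j,j)
        = if (i:ℕ) < s then (if (j:ℕ) < s then ((c:ℝ):ℂ) else 0) else 0 := by
      intro i j
      simp only [hαdef, hwdef, outerM, Matrix.add_apply, Matrix.smul_apply,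
        Matrix.diagonal_apply, Matrix.of_apply, Prod.mk.injEq, smul_eq_mul,
        apply_ite (starRingEnd ℂ), _root_.map_one, map_zero]
      by_cases h1 : (i:ℕ) < s <;> by_cases h2 : (j:ℕ) < s <;>
        by_cases h3 : i = j <;> simp [h1, h2, h3]
    have hii : ∀ i : Fin d, α (i,i) (i,i) = if (i:ℕ) < s then ((c:ℝ):ℂ) else 0 :=
      fun i => hαdiag (i, i)
    have hS : (∑ i : Fin d, ∑ j : Fin d, α (i,i) (j,j)) = ((c * s * s : ℝ) : ℂ) := by
      simp only [hij, Finset.sum_ite_irrel, Finset.sum_const_zero, sum_indicator d s hsd]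
      push_cast
      ring
    have hT : (∑ i : Fin d, α (i,i) (i,i)) = ((c * s : ℝ) : ℂ) := by
      simp only [hii, sum_indicator d s hsd]
      push_cast
      ring
    rw [tr_obj, hS, hT]
    simp only [Complex.real_smul, Complex.add_re, Complex.re_ofReal_mul, Complex.ofReal_re]
    rw [hc]
    field_simp


lemma upper (d n : ℕ) (hn : 1 ≤ n) (lam : ℝ)
    {α : Matrix (Fin d × Fin d) (Fin d × Fin d) ℂ} {ρ : Matrix (Fin d) (Fin d) ℂ}
    (hρ : ρ.PosSemidef) (htr : ρ.trace = 1) (hα : α.PosSemidef)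
    (hsub : (ρ ⊗ₖ (1 : Matrix (Fin d) (Fin d) ℂ) - α).PosSemidef)
    (hdeph : dephM α = ((1:ℝ)/(n:ℝ)) • (dephM ρ ⊗ₖ (1 : Matrix (Fin d) (Fin d) ℂ))) :
    ∃ Sre : ℝ, 0 ≤ Sre ∧ Sre ≤ 1 ∧ Sre ≤ (d:ℝ) * (1/(n:ℝ)) ∧
      ((αᵀ * (lam • phiPlus d + (1 - lam) • dephM (phiPlus d))).trace).re
        = lam * Sre + (1 - lam) * (1/(n:ℝ)) := by
  have hTi : ∀ i : Fin d, α (i,i) (i,i) = Complex.ofReal ((1:ℝ)/(n:ℝ)) * ρ i i := by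
    intro i
    have h := congrFun (congrFun hdeph (i,i)) (i,i)
    simp only [dephM, Matrix.of_apply, if_pos rfl, if_true, Matrix.smul_apply,
      Matrix.kroneckerMap_apply, Matrix.one_apply_eq, mul_one,
      Complex.real_smul] at h
    exact h
  have hT : (∑ i : Fin d, α (i,i) (i,i)) = Complex.ofReal ((1:ℝ)/(n:ℝ)) := by
    simp only [hTi]
    rw [← Finset.mul_sum]
    have : (∑ i : Fin d, ρ i i) = ρ.trace := rfl
    rw [this, htr, mul_one]
  set S : ℂ := ∑ i : Fin d, ∑ j : Fin d, α (i,i) (j,j) with hSdef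
  have hS_nonneg : 0 ≤ S := by
    have h := hα.dotProduct_mulVec_nonneg (dvec d)
    rwa [quad_dvec] at h
  have hS1 : S.re ≤ 1 := by
    have h := hsub.dotProduct_mulVec_nonneg (dvec d)
    rw [quad_dvec] at h
    have hkron : (∑ i : Fin d, ∑ j : Fin d,
        (ρ ⊗ₖ (1 : Matrix (Fin d) (Fin d) ℂ) - α) (i,i) (j,j)) = 1 - S := by
      simp only [Matrix.sub_apply, Finset.sum_sub_distrib]
      have h1 : (∑ i : Fin d, ∑ j : Fin d,
          (ρ ⊗ₖ (1 : Matrix (Fin d) (Fin d) ℂ)) (i,i) (j,j)) = ρ.trace := by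
        simp only [Matrix.kroneckerMap_apply, Matrix.one_apply, mul_ite, mul_one,
          mul_zero, Finset.sum_ite_eq, Finset.sum_ite_eq', Finset.mem_univ, if_true]
        rfl
      rw [h1, htr, hSdef]
    rw [hkron] at h
    have h' := (Complex.nonneg_iff.1 h).1
    simp only [Complex.sub_re, Complex.one_re] at h'
    linarith
  have key : ∀ i j : Fin d, (α (i,i) (j,j)).re + (α (j,j) (i,i)).re
      ≤ (α (i,i) (i,i)).re + (α (j,j) (j,j)).re := by
    intro i j
    have h := hα.dotProduct_mulVec_nonneg (pvec d i j)
    rw [quad_pvec] at h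
    have h' := (Complex.nonneg_iff.1 h).1
    simp only [Complex.sub_re, Complex.add_re] at h'
    linarith
  have hSre : S.re = ∑ i : Fin d, ∑ j : Fin d, (α (i,i) (j,j)).re := by
    rw [hSdef, Complex.re_sum]
    exact Finset.sum_congr rfl fun i _ => Complex.re_sum _ _
  have hTre : (∑ i : Fin d, (α (i,i) (i,i)).re) = 1/(n:ℝ) := by
    rw [← Complex.re_sum, hT, Complex.ofReal_re]
  have hSd : S.re ≤ (d:ℝ) * (1/(n:ℝ)) := by
    have hsum := Finset.sum_le_sum (s := (Finset.univ : Finset (Fin d)))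
      (fun i _ => Finset.sum_le_sum (s := (Finset.univ : Finset (Fin d)))
        (fun j _ => key i j))
    have hL : (∑ i : Fin d, ∑ j : Fin d, ((α (i,i) (j,j)).re + (α (j,j) (i,i)).re))
        = S.re + S.re := by
      simp only [Finset.sum_add_distrib]
      rw [hSre]
      congr 1
      rw [Finset.sum_comm]
    have hR : (∑ i : Fin d, ∑ j : Fin d, ((α (i,i) (i,i)).re + (α (j,j) (j,j)).re))
        = (d:ℝ) * (1/(n:ℝ)) + (d:ℝ) * (1/(n:ℝ)) := by
      simp only [Finset.sum_add_distrib, Finset.sum_const, Finset.card_univ,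
        Fintype.card_fin, nsmul_eq_mul]
      rw [← Finset.mul_sum]
      simp only [hTre]
    rw [hL, hR] at hsum
    linarith
  refine ⟨S.re, (Complex.nonneg_iff.1 hS_nonneg).1, hS1, hSd, ?_⟩
  rw [tr_obj, ← hSdef]
  simp only [Complex.real_smul, Complex.add_re, Complex.re_ofReal_mul]
  have him : (∑ i : Fin d, α (i,i) (i,i)).re = 1/(n:ℝ) := by
    rw [hT, Complex.ofReal_re]
  rw [him]

end DistillAux

/-- One-shot coherence distillation fidelity under MISC for the partially
dephasing channel. -/
theorem distill_dephasing
    (d n : ℕ) (hd : 1 ≤ d) (hn : 1 ≤ n)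
    (lam : ℝ) (h0 : 0 ≤ lam) (h1 : lam ≤ 1) :
    (n ≤ d →
      IsGreatest
        {r : ℝ | ∃ α : Matrix (Fin d × Fin d) (Fin d × Fin d) ℂ,
          (∃ ρ : Matrix (Fin d) (Fin d) ℂ,
            ρ.PosSemidef ∧ ρ.trace = 1 ∧ α.PosSemidef ∧
            (ρ ⊗ₖ (1 : Matrix (Fin d) (Fin d) ℂ) - α).PosSemidef ∧
            dephM α = ((1 : ℝ) / (n : ℝ)) •
              (dephM ρ ⊗ₖ (1 : Matrix (Fin d) (Fin d) ℂ))) ∧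
          r = ((αᵀ * (lam • phiPlus d + (1 - lam) • dephM (phiPlus d))).trace).re}
        ((1 + ((n : ℝ) - 1) * lam) / (n : ℝ))) ∧
    (d ≤ n →
      IsGreatest
        {r : ℝ | ∃ α : Matrix (Fin d × Fin d) (Fin d × Fin d) ℂ,
          (∃ ρ : Matrix (Fin d) (Fin d) ℂ,
            ρ.PosSemidef ∧ ρ.trace = 1 ∧ α.PosSemidef ∧
            (ρ ⊗ₖ (1 : Matrix (Fin d) (Fin d) ℂ) - α).PosSemidef ∧
            dephM α = ((1 : ℝ) / (n : ℝ)) •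
              (dephM ρ ⊗ₖ (1 : Matrix (Fin d) (Fin d) ℂ))) ∧
          r = ((αᵀ * (lam • phiPlus d + (1 - lam) • dephM (phiPlus d))).trace).re}
        ((lam * (d : ℝ) + (1 - lam)) / (n : ℝ))) := by
  have hn0 : (0:ℝ) < (n:ℝ) := by exact_mod_cast hn
  constructor <;> intro hcase
  · constructor
    · obtain ⟨α, hfeas, hval⟩ := DistillAux.mem_value d n n hn hn hcase le_rfl lam
      refine ⟨α, hfeas, ?_⟩
      rw [show (1 + ((n:ℝ) - 1) * lam) / (n:ℝ) = (lam * (n:ℝ) + (1 - lam)) / (n:ℝ) from by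
        ring]
      exact hval
    · rintro r ⟨α, ⟨ρ, hρ, htr, hα, hsub, hdeph⟩, rfl⟩
      obtain ⟨Sre, hS0, hS1, hSd, hval⟩ := DistillAux.upper d n hn lam hρ htr hα hsub hdeph
      rw [hval]
      calc lam * Sre + (1 - lam) * (1/(n:ℝ))
          ≤ lam * 1 + (1 - lam) * (1/(n:ℝ)) := by
            have := mul_le_mul_of_nonneg_left hS1 h0
            linarith
        _ = (1 + ((n:ℝ) - 1) * lam) / (n:ℝ) := by field_simp; ring
  · constructor
    · obtain ⟨α, hfeas, hval⟩ := DistillAux.mem_value d n d hn hd le_rfl hcase lam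
      refine ⟨α, hfeas, ?_⟩
      exact hval
    · rintro r ⟨α, ⟨ρ, hρ, htr, hα, hsub, hdeph⟩, rfl⟩
      obtain ⟨Sre, hS0, hS1, hSd, hval⟩ := DistillAux.upper d n hn lam hρ htr hα hsub hdeph
      rw [hval]
      calc lam * Sre + (1 - lam) * (1/(n:ℝ))
          ≤ lam * ((d:ℝ) * (1/(n:ℝ))) + (1 - lam) * (1/(n:ℝ)) := by
            have := mul_le_mul_of_nonneg_left hSd h0
            linarith
        _ = (lam * (d:ℝ) + (1 - lam)) / (n:ℝ) := by field_simp

end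
end
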